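/- arXiv:1911.01336 — 10 statements merged into one kernel-verified Lean document; each statement's English description precedes it below -/
import Mathlib

section
/- Rosenthal's lemma: Let M = (m_{k,n})_{k,n∈ℕ} be a Rosenthal matrix. Then for every ε > 0 and every infinite set B ⊆ ℕ there is an infinite set A ⊆ B such that M is ε-fragmented by A, i.e., for every k ∈ A one has Σ_{n ∈ A \ {k}} m_{k,n} ≤ ε. -/
/-- A *Rosenthal matrix* is a matrix `M = (m_{k,n})` of non-negative reals whose rows are
summable and such that `‖M‖_∞ = sup_k Σ_n m_{k,n}` is finite. -/
def IsRosenthalMatrix (M : ℕ → ℕ → ℝ) : Prop :=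
  (∀ k n, 0 ≤ M k n) ∧ (∀ k, Summable (M k)) ∧
    BddAbove (Set.range fun k => ∑' n, M k n)

/-- `M` is `ε`-fragmented by `A`: for every `k ∈ A`, `Σ_{n ∈ A \ {k}} m_{k,n} ≤ ε`. -/
def Fragments (M : ℕ → ℕ → ℝ) (ε : ℝ) (A : Set ℕ) : Prop :=
  ∀ k ∈ A, ∑' n : (A \ {k} : Set ℕ), M k ↑n ≤ ε

/-!
Suppose no infinite subset of `B` is `ε`-fragmenting. Split an infinite `D ⊆ B` into infinitely
many disjoint infinite pieces `P j`. The rows `k ∈ P j` whose mass on `P j \ {k}` is at most `ε`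
form a fragmenting set, hence are finitely many, so each piece contains a row `k j` with more than
`ε` of mass on its own piece. On `D' = {k j}` every row has therefore lost more than `ε` of its mass
on `D`. Iterating, after `t` steps every row of some infinite set has lost `t ε`, which exceeds
`‖M‖_∞` for large `t`.
-/

open Set Function

section SubtypeSum

variable {α : Type*} {f : α → ℝ}

lemma tsum_subtype_mono (hf₀ : ∀ a, 0 ≤ f a) (hf : Summable f) {s t : Set α} (hst : s ⊆ t) :
    ∑' x : s, f x ≤ ∑' x : t, f x :=
  (hf.subtype s).tsum_le_tsum_of_inj (inclusion hst) (inclusion_injective hst)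
    (fun c _ => hf₀ c) (fun _ => le_rfl) (hf.subtype t)

lemma tsum_subtype_add_tsum_subtype_le (hf₀ : ∀ a, 0 ≤ f a) (hf : Summable f) {s t u : Set α}
    (hst : Disjoint s t) (hs : s ⊆ u) (ht : t ⊆ u) :
    ∑' x : s, f x + ∑' x : t, f x ≤ ∑' x : u, f x := by
  rw [← (hf.subtype s).tsum_union_disjoint hst (hf.subtype t)]
  exact tsum_subtype_mono hf₀ hf (union_subset hs ht)

end SubtypeSum

lemma Set.Infinite.exists_pairwise_disjoint_infinite_subsets {α : Type*} [Countable α]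
    {D : Set α} (hD : D.Infinite) :
    ∃ P : ℕ → Set α, (∀ j, P j ⊆ D) ∧ (∀ j, (P j).Infinite) ∧ Pairwise (Disjoint on P) := by
  have := hD.to_subtype
  obtain ⟨e⟩ : Nonempty (ℕ × ℕ ≃ D) := nonempty_equiv_of_countable
  have he : Injective fun p => (e p : α) := Subtype.val_injective.comp e.injective
  refine ⟨fun j => range fun i => (e (j, i) : α), ?_, fun j => ?_, fun j j' hjj' => ?_⟩
  · rintro j _ ⟨i, rfl⟩
    exact (e (j, i)).2
  · exact infinite_range_of_injective fun i i' h => (Prod.ext_iff.mp (he h)).2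
  · rw [Function.onFun, disjoint_left]
    rintro _ ⟨i, rfl⟩ ⟨i', h⟩
    exact hjj' (Prod.ext_iff.mp (he h)).1.symm

noncomputable def rowSum (M : ℕ → ℕ → ℝ) (k : ℕ) (A : Set ℕ) : ℝ :=
  ∑' n : (A \ {k} : Set ℕ), M k n

section RowSum

variable {M : ℕ → ℕ → ℝ} (h₀ : ∀ k n, 0 ≤ M k n) (hs : ∀ k, Summable (M k))
include h₀ hs

lemma fragments_setOf_rowSum_le (ε : ℝ) (P : Set ℕ) :
    Fragments M ε {k ∈ P | rowSum M k P ≤ ε} := fun k hk =>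
  (tsum_subtype_mono (h₀ k) (hs k) (sdiff_subset_sdiff_left fun _ hn => hn.1)).trans hk.2

lemma exists_infinite_subset_rowSum_add_le {ε : ℝ} {D : Set ℕ} (hD : D.Infinite)
    (hno : ∀ A ⊆ D, A.Infinite → ¬ Fragments M ε A) :
    ∃ D' ⊆ D, D'.Infinite ∧ ∀ k ∈ D', rowSum M k D' + ε ≤ rowSum M k D := by
  obtain ⟨P, hPD, hPinf, hPdisj⟩ := hD.exists_pairwise_disjoint_infinite_subsets
  have hbad : ∀ j, ∃ k ∈ P j, ε < rowSum M k (P j) := by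
    intro j
    have hfin : {k ∈ P j | rowSum M k (P j) ≤ ε}.Finite := by
      by_contra hinf
      exact hno _ (fun _ hk => hPD j hk.1) hinf (fragments_setOf_rowSum_le h₀ hs ε (P j))
    obtain ⟨k, hkP, hk⟩ := ((hPinf j).sdiff hfin).nonempty
    exact ⟨k, hkP, lt_of_not_ge fun h => hk ⟨hkP, h⟩⟩
  choose k hkP hk using hbad
  have hmem : ∀ j j', k j' ∈ P j → j' = j := fun j j' h =>
    hPdisj.eq (not_disjoint_iff.mpr ⟨k j', hkP j', h⟩)
  have hkinj : Injective k := fun j j' h => hmem j' j (h ▸ hkP j')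
  refine ⟨range k, range_subset_iff.mpr fun j => hPD j (hkP j),
    infinite_range_of_injective hkinj, ?_⟩
  rintro _ ⟨j, rfl⟩
  have hdisj : Disjoint (range k \ {k j}) (P j \ {k j}) := by
    rw [disjoint_left]
    rintro _ ⟨⟨j', rfl⟩, hne⟩ ⟨hj', -⟩
    exact hne (congrArg k (hmem j j' hj'))
  have := tsum_subtype_add_tsum_subtype_le (h₀ (k j)) (hs (k j)) hdisj
    (sdiff_subset_sdiff_left (range_subset_iff.mpr fun j => hPD j (hkP j)))
    (sdiff_subset_sdiff_left (hPD j))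
  exact (add_le_add le_rfl (hk j).le).trans this

lemma exists_infinite_subset_rowSum_add_mul_le {ε : ℝ} {B : Set ℕ} (hB : B.Infinite)
    (hno : ∀ A ⊆ B, A.Infinite → ¬ Fragments M ε A) (t : ℕ) :
    ∃ D ⊆ B, D.Infinite ∧ ∀ k ∈ D, rowSum M k D + t * ε ≤ rowSum M k B := by
  induction t with
  | zero => exact ⟨B, subset_rfl, hB, fun k _ => by simp⟩
  | succ t ih =>
    obtain ⟨D, hDB, hDinf, hD⟩ := ih
    obtain ⟨D', hD'D, hD'inf, hD'⟩ := exists_infinite_subset_rowSum_add_le h₀ hs hDinf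
      fun A hAD => hno A (hAD.trans hDB)
    refine ⟨D', hD'D.trans hDB, hD'inf, fun k hk => ?_⟩
    have h₁ := hD' k hk
    have h₂ := hD k (hD'D hk)
    push_cast
    linarith

end RowSum

/-- Rosenthal's lemma: for every Rosenthal matrix `M`, every `ε > 0` and every infinite
`B ⊆ ℕ` there is an infinite `A ⊆ B` such that `M` is `ε`-fragmented by `A`. -/
theorem rosenthal_lemma (M : ℕ → ℕ → ℝ) (hM : IsRosenthalMatrix M)
    (ε : ℝ) (hε : 0 < ε) (B : Set ℕ) (hB : B.Infinite) :
    ∃ A ⊆ B, A.Infinite ∧ Fragments M ε A := by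
  obtain ⟨h₀, hs, C, hC⟩ := hM
  by_contra! hno
  obtain ⟨t, ht⟩ := exists_nat_gt (C / ε)
  obtain ⟨D, -, hD, hDB⟩ := exists_infinite_subset_rowSum_add_mul_le h₀ hs hB hno t
  obtain ⟨k, hk⟩ := hD.nonempty
  have h_nonneg : 0 ≤ rowSum M k D := tsum_nonneg fun n => h₀ k n
  have h_bdd : rowSum M k B ≤ C :=
    ((hs k).tsum_subtype_le _ _ (h₀ k)).trans (hC ⟨k, rfl⟩)
  have h_big : C < t * ε := (div_lt_iff₀ hε).mp ht
  linarith [hDB k hk]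
end

section
/- Let M = (m_{k,n})_{k,n∈ℕ} be a Rosenthal matrix such that ‖M‖_∞ ≤ 1 and m_{k,n} = 0 whenever n ≥ k. Then for every positive integer l there is a partition {P_1, …, P_l} of ℕ into l pieces such that M is (1/l)-fragmented by P_i for every 1 ≤ i ≤ l. -/
/-- `‖M‖_∞`, the supremum of the row sums of `M`. -/
noncomputable def rosNorm (M : ℕ → ℕ → ℝ) : ℝ := ⨆ k, ∑' n, M k n

open Finset

theorem exists_sum_filter_eq_le {ι : Type*} [DecidableEq ι] [Fintype ι] [Nonempty ι]
    (c : ℕ → ι) (f : ℕ → ℝ) (s : Finset ℕ) {ε : ℝ} (h : ∑ n ∈ s, f n ≤ Fintype.card ι * ε) :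
    ∃ i, ∑ n ∈ s with c n = i, f n ≤ ε := by
  have hsum : ∑ i, ∑ n ∈ s with c n = i, f n ≤ ∑ _i : ι, ε := by
    rwa [sum_fiberwise, sum_const, card_univ, nsmul_eq_mul]
  obtain ⟨i, -, hi⟩ := exists_le_of_sum_le univ_nonempty hsum
  exact ⟨i, hi⟩

noncomputable def greedyColoring (M : ℕ → ℕ → ℝ) (ε : ℝ) (ι : Type*) [DecidableEq ι]
    [Nonempty ι] : ℕ → ι
  | k => Classical.epsilon fun i =>
      ∑ n ∈ (range k).attach, (if greedyColoring M ε ι n = i then M k n else 0) ≤ ε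
  termination_by k => k
  decreasing_by exact mem_range.mp n.2

section GreedyColoring

variable {ι : Type*} [DecidableEq ι] [Nonempty ι] (M : ℕ → ℕ → ℝ) (ε : ℝ)

theorem greedyColoring_eq (k : ℕ) :
    greedyColoring M ε ι k = Classical.epsilon fun i =>
      ∑ n ∈ range k with greedyColoring M ε ι n = i, M k n ≤ ε := by
  rw [greedyColoring]
  congr 1
  funext i
  rw [sum_filter, sum_attach (range k) fun n => if greedyColoring M ε ι n = i then M k n else 0]

theorem sum_filter_greedyColoring_le [Fintype ι]
    (hrow : ∀ k, ∑ n ∈ range k, M k n ≤ Fintype.card ι * ε) (k : ℕ) :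
    ∑ n ∈ range k with greedyColoring M ε ι n = greedyColoring M ε ι k, M k n ≤ ε := by
  rw [greedyColoring_eq M ε k]
  exact Classical.epsilon_spec (exists_sum_filter_eq_le _ _ _ (hrow k))

end GreedyColoring

theorem tsum_eq_sum_range_of_eq_zero {α : Type*} [AddCommMonoid α] [TopologicalSpace α]
    {f : ℕ → α} {k : ℕ} (hf : ∀ n, k ≤ n → f n = 0) : ∑' n, f n = ∑ n ∈ range k, f n :=
  tsum_eq_sum fun n hn => hf n (not_lt.mp (mt mem_range.mpr hn))

theorem fragments_preimage_singleton {ι : Type*} [DecidableEq ι] {M : ℕ → ℕ → ℝ} {ε : ℝ}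
    (htriang : ∀ k n, k ≤ n → M k n = 0) (c : ℕ → ι)
    (hc : ∀ k, ∑ n ∈ range k with c n = c k, M k n ≤ ε) (i : ι) :
    Fragments M ε (c ⁻¹' {i}) := by
  rintro k (rfl : c k = i)
  calc ∑' n : (c ⁻¹' {c k} \ {k} : Set ℕ), M k n
      = ∑ n ∈ range k, (c ⁻¹' {c k} \ {k}).indicator (M k) n := by
        rw [_root_.tsum_subtype]
        exact tsum_eq_sum_range_of_eq_zero fun n hn =>
          Set.indicator_apply_eq_zero.2 fun _ => htriang k n hn
    _ = ∑ n ∈ range k with c n = c k, M k n := by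
        rw [sum_filter]
        refine sum_congr rfl fun n hn => ?_
        rcases eq_or_ne (c n) (c k) with hcn | hcn
        · rw [if_pos hcn, Set.indicator_of_mem (s := c ⁻¹' {c k} \ {k}) ⟨hcn, (mem_range.1 hn).ne⟩]
        · rw [if_neg hcn, Set.indicator_of_notMem fun hmem => hcn hmem.1]
    _ ≤ ε := hc k

/-- Lemma: if `M` is a Rosenthal matrix with `‖M‖_∞ ≤ 1` which is lower triangular
(`m_{k,n} = 0` whenever `n ≥ k`), then for every positive `l` there is a partition of `ℕ`
into `l` pieces each of which `(1/l)`-fragments `M`. -/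
theorem triangular_paving_below_diagonal (M : ℕ → ℕ → ℝ) (hM : IsRosenthalMatrix M)
    (hnorm : rosNorm M ≤ 1) (htriang : ∀ k n, k ≤ n → M k n = 0)
    (l : ℕ) (hl : 0 < l) :
    ∃ P : Fin l → Set ℕ, (⋃ i, P i) = Set.univ ∧ Pairwise (Function.onFun Disjoint P) ∧
      ∀ i, Fragments M (1 / l) (P i) := by
  have : Nonempty (Fin l) := ⟨⟨0, hl⟩⟩
  set c := greedyColoring M (1 / l) (Fin l)
  have hrow (k : ℕ) : ∑ n ∈ range k, M k n ≤ Fintype.card (Fin l) * (1 / l) := by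
    rw [Fintype.card_fin, mul_one_div_cancel (by positivity),
      ← tsum_eq_sum_range_of_eq_zero (htriang k)]
    exact (le_ciSup hM.2.2 k).trans hnorm
  exact ⟨fun i => c ⁻¹' {i}, Set.iUnion_eq_univ_iff.2 fun n => ⟨c n, rfl⟩,
    pairwise_disjoint_fiber c,
    fragments_preimage_singleton htriang c (sum_filter_greedyColoring_le M _ hrow)⟩
end

section
/- Paving lemma for Rosenthal matrices: For every ε > 0 there is a natural number l(ε) such that for every Rosenthal matrix M there is a partition {P_1, …, P_{l(ε)}} of ℕ into l(ε) pieces such that M is (ε·‖M‖_∞)-fragmented by P_i for every 1 ≤ i ≤ l(ε). -/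
/-! Colour `ℕ` with pairs of colours from a set of `L ≥ 2/ε` colours. Processing a finite set in
increasing order, each `k` can be given a colour whose earlier members carry at most `‖M‖/L` of
row `k` (pigeonhole); doing the same in decreasing order and taking the product colouring bounds
the off-diagonal weight of row `k` inside its colour class by `2‖M‖/L ≤ ε‖M‖`. Since this bound
only involves finitely many entries at a time, the colourings of finite sets pass to a colouring
of `ℕ` by compactness. -/

open Finset Filter

section Coloring

variable {ι α : Type*}

-- Rado's selection principle, proved with an ultrafilter on the finite subsets of `ι`.
theorem exists_forall_finset_of_local [Finite α] (Q : (ι → α) → Finset ι → Prop)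
    (hloc : ∀ F c c', (∀ i ∈ F, c i = c' i) → Q c F → Q c' F)
    (hanti : ∀ F G c, G ⊆ F → Q c F → Q c G) (h : ∀ F, ∃ c, Q c F) :
    ∃ c, ∀ F, Q c F := by
  choose c hc using h
  let U : Ultrafilter (Finset ι) := .of atTop
  have hlim : ∀ i, ∃ a, ∀ᶠ F in (U : Filter (Finset ι)), c F i = a := fun i => by
    obtain ⟨a, ha⟩ := (U.map (c · i)).eq_pure_of_finite
    exact ⟨a, show {a} ∈ U.map (c · i) by rw [ha]; exact Ultrafilter.mem_pure.2 rfl⟩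
  choose c₀ hc₀ using hlim
  refine ⟨c₀, fun F => ?_⟩
  have hsup : ∀ᶠ F' in (U : Filter (Finset ι)), F ⊆ F' :=
    Ultrafilter.of_le _ (eventually_ge_atTop F)
  obtain ⟨F', hFF', hagree⟩ := (hsup.and ((eventually_all_finset F).2 fun i _ => hc₀ i)).exists
  exact hloc F _ _ hagree (hanti F' F _ hFF' (hc F'))

variable [Fintype α] [Nonempty α] [DecidableEq α]

theorem exists_coloring_sum_lt_same_color_le [LinearOrder ι] (M : ι → ι → ℝ) {B : ℝ}
    (hB : ∀ k (s : Finset ι), ∑ n ∈ s, M k n ≤ B) (F : Finset ι) :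
    ∃ c : ι → α, ∀ k ∈ F, ∑ n ∈ F with n < k ∧ c n = c k, M k n ≤ B / Fintype.card α := by
  induction F using Finset.induction_on_max with
  | empty => exact ⟨fun _ => Classical.arbitrary α, by simp⟩
  | insert a s hlt ih =>
    obtain ⟨c, hc⟩ := ih
    obtain ⟨y, -, hy⟩ := exists_sum_fiber_le_of_maps_to_of_sum_le_nsmul (s := s) (t := univ)
      (f := c) (w := M a) (b := B / Fintype.card α) (fun _ _ => mem_univ _) univ_nonempty
      (by rw [card_univ, nsmul_eq_mul, mul_div_cancel₀ _ (by positivity)]; exact hB a s)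
    refine ⟨Function.update c a y, fun k hk => ?_⟩
    rcases mem_insert.1 hk with rfl | hks
    · have hfiber : {n ∈ insert k s | n < k ∧ Function.update c k y n = Function.update c k y k}
          = {n ∈ s | c n = y} := by
        ext n
        have hks : k ∉ s := fun h => (hlt k h).false
        by_cases hnk : n = k
        · simp [hnk, hks]
        · simpa [hnk] using fun hn _ => hlt n hn
      rw [hfiber]
      exact hy
    · have hka : k ≠ a := (hlt k hks).ne
      have hfiber : {n ∈ insert a s | n < k ∧ Function.update c a y n = Function.update c a y k}
          = {n ∈ s | n < k ∧ c n = c k} := by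
        ext n
        by_cases hna : n = a
        · simp [hna, (hlt k hks).asymm]
        · simp [hna, hka]
      rw [hfiber]
      exact hc k hks

theorem exists_coloring_sum_same_color_le_of_finset [LinearOrder ι] {M : ι → ι → ℝ} {B : ℝ}
    (hM : ∀ k n, 0 ≤ M k n) (hB : ∀ k (s : Finset ι), ∑ n ∈ s, M k n ≤ B) (F : Finset ι) :
    ∃ c : ι → α × α, ∀ k ∈ F,
      ∑ n ∈ F with n ≠ k ∧ c n = c k, M k n ≤ 2 * (B / Fintype.card α) := by
  obtain ⟨c₁, hc₁⟩ := exists_coloring_sum_lt_same_color_le (α := α) M hB F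
  obtain ⟨c₂, hc₂⟩ : ∃ c₂ : ι → α, ∀ k ∈ F,
      ∑ n ∈ F with k < n ∧ c₂ n = c₂ k, M k n ≤ B / Fintype.card α :=
    exists_coloring_sum_lt_same_color_le (ι := ιᵒᵈ) M hB F
  refine ⟨fun n => (c₁ n, c₂ n), fun k hk => ?_⟩
  have hsplit : {n ∈ F | n ≠ k ∧ (c₁ n, c₂ n) = (c₁ k, c₂ k)} ⊆
      {n ∈ F | n < k ∧ c₁ n = c₁ k} ∪ {n ∈ F | k < n ∧ c₂ n = c₂ k} := by
    intro n
    simp only [mem_filter, mem_union, ne_iff_lt_or_gt, Prod.mk.injEq]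
    tauto
  calc ∑ n ∈ F with n ≠ k ∧ (c₁ n, c₂ n) = (c₁ k, c₂ k), M k n
      ≤ ∑ n ∈ {n ∈ F | n < k ∧ c₁ n = c₁ k} ∪ {n ∈ F | k < n ∧ c₂ n = c₂ k}, M k n :=
        sum_le_sum_of_subset_of_nonneg hsplit fun n _ _ => hM k n
    _ = ∑ n ∈ F with n < k ∧ c₁ n = c₁ k, M k n + ∑ n ∈ F with k < n ∧ c₂ n = c₂ k, M k n :=
        sum_union (disjoint_filter.2 fun n _ h₁ h₂ => h₁.1.asymm h₂.1)
    _ ≤ B / Fintype.card α + B / Fintype.card α := add_le_add (hc₁ k hk) (hc₂ k hk)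
    _ = 2 * (B / Fintype.card α) := (two_mul _).symm

theorem exists_coloring_sum_same_color_le [LinearOrder ι] {M : ι → ι → ℝ} {B : ℝ}
    (hM : ∀ k n, 0 ≤ M k n) (hB : ∀ k (s : Finset ι), ∑ n ∈ s, M k n ≤ B) :
    ∃ c : ι → α × α, ∀ k (F : Finset ι),
      ∑ n ∈ F with n ≠ k ∧ c n = c k, M k n ≤ 2 * (B / Fintype.card α) := by
  have hmono {k : ι} {c : ι → α × α} {G F : Finset ι} (hGF : G ⊆ F) :
      ∑ n ∈ G with n ≠ k ∧ c n = c k, M k n ≤ ∑ n ∈ F with n ≠ k ∧ c n = c k, M k n :=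
    sum_le_sum_of_subset_of_nonneg (filter_subset_filter _ hGF) fun n _ _ => hM k n
  obtain ⟨c, hc⟩ := exists_forall_finset_of_local
    (fun c F => ∀ k ∈ F, ∑ n ∈ F with n ≠ k ∧ c n = c k, M k n ≤ 2 * (B / Fintype.card α))
    (fun F c c' hcc' h k hk => by
      have hfilter : {n ∈ F | n ≠ k ∧ c' n = c' k} = {n ∈ F | n ≠ k ∧ c n = c k} :=
        filter_congr fun n hn => by rw [hcc' n hn, hcc' k hk]
      exact hfilter ▸ h k hk)
    (fun F G c hGF h k hk => (hmono hGF).trans (h k (hGF hk)))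
    (exists_coloring_sum_same_color_le_of_finset hM hB)
  exact ⟨c, fun k F => (hmono (subset_insert k F)).trans (hc _ k (mem_insert_self k F))⟩

end Coloring

theorem fragments_preimage_singleton_s3 {β : Type*} [DecidableEq β] {M : ℕ → ℕ → ℝ} {c : ℕ → β}
    {δ : ℝ} (hδ : 0 ≤ δ) (h : ∀ k (F : Finset ℕ), ∑ n ∈ F with n ≠ k ∧ c n = c k, M k n ≤ δ)
    (b : β) : Fragments M δ (c ⁻¹' {b}) := by
  intro k hk
  rw [_root_.tsum_subtype]
  refine tsum_le_of_sum_le' hδ fun F => ?_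
  have hk : c k = b := hk
  calc ∑ n ∈ F, (c ⁻¹' {b} \ {k}).indicator (M k) n
      = ∑ n ∈ F with n ≠ k ∧ c n = c k, M k n := by
        rw [sum_filter]
        refine sum_congr rfl fun n _ => ?_
        simp [Set.indicator, hk, and_comm]
    _ ≤ δ := h k F

theorem IsRosenthalMatrix.sum_le_rosNorm {M : ℕ → ℕ → ℝ} (hM : IsRosenthalMatrix M) (k : ℕ)
    (s : Finset ℕ) : ∑ n ∈ s, M k n ≤ rosNorm M :=
  ((hM.2.1 k).sum_le_tsum s fun n _ => hM.1 k n).trans (le_ciSup hM.2.2 k)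

/-- Paving lemma for Rosenthal matrices: for every `ε > 0` there is `l(ε) ∈ ℕ` such that
every Rosenthal matrix `M` admits a partition of `ℕ` into `l(ε)` pieces each of which
`(ε·‖M‖_∞)`-fragments `M`. -/
theorem paving_lemma_rosenthal (ε : ℝ) (hε : 0 < ε) :
    ∃ l : ℕ, 0 < l ∧ ∀ M : ℕ → ℕ → ℝ, IsRosenthalMatrix M →
      ∃ P : Fin l → Set ℕ, (⋃ i, P i) = Set.univ ∧ Pairwise (Function.onFun Disjoint P) ∧
        ∀ i, Fragments M (ε * rosNorm M) (P i) := by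
  obtain ⟨L, hL⟩ := exists_nat_ge (2 / ε)
  have hL₀ : 0 < L := by exact_mod_cast (by positivity : 0 < 2 / ε).trans_le hL
  have : NeZero L := ⟨hL₀.ne'⟩
  refine ⟨L * L, Nat.mul_pos hL₀ hL₀, fun M hM => ?_⟩
  obtain ⟨c, hc⟩ := exists_coloring_sum_same_color_le (α := Fin L) hM.1 hM.sum_le_rosNorm
  have hnorm : 0 ≤ rosNorm M := by simpa using hM.sum_le_rosNorm 0 ∅
  have hδ : 2 * (rosNorm M / L) ≤ ε * rosNorm M := by
    have h2L : 2 / (L : ℝ) ≤ ε := (div_le_comm₀ hε (by positivity)).1 hL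
    calc 2 * (rosNorm M / L) = 2 / L * rosNorm M := by ring
      _ ≤ ε * rosNorm M := by gcongr
  rw [Fintype.card_fin] at hc
  refine ⟨fun i => (finProdFinEquiv ∘ c) ⁻¹' {i}, Set.iUnion_eq_univ_iff.2 fun n => ⟨_, rfl⟩,
    pairwise_disjoint_fiber _, fragments_preimage_singleton_s3 (mul_nonneg hε.le hnorm) fun k F => ?_⟩
  simpa using (hc k F).trans hδ
end

section
/- Every π-base of a nonprincipal ultrafilter on ℕ is a Rosenthal family: if u is a nonprincipal ultrafilter on ℕ and B is a π-base of u, then for every Rosenthal matrix M and every ε > 0 there is A ∈ B such that M is ε-fragmented by A. -/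
/-!
Colour `ℕ` with finitely many colours so that every colour class `ε`-fragments `M`: the
ultrafilter contains one colour class, and the member of the `π`-base inside it inherits the
fragmentation.

With `δ = ε / 3` and `C = ‖M‖_∞`, cut `ℕ` into blocks `[b j, b (j + 1))` such that each row `k`
of block `j` has mass at most `δ` beyond `b (j + 2)`. For `k` in a colour class, split the sum
over `n ≠ k` into the `n < k`, the later `n` of the block of `k`, and the `n` of later blocks.
Giving each point in turn the colour of least mass among its predecessors, with
`m = ⌈C / δ⌉ + 1` colours, bounds the first part by `C / m ≤ δ`; the same greedy colouring run
along the order that reverses every block bounds the second; colouring blocks by parity pushes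
the third part beyond `b (j + 2)`.
-/

open Finset

noncomputable def greedyColouring (w : ℕ → ℕ → ℝ) (m : ℕ) [NeZero m] (v : ℕ) : Fin m :=
  (Finite.exists_min fun i => ∑ n : Fin v, if greedyColouring w m n = i then w v n else 0).choose
termination_by v

theorem sum_greedyColouring_le (w : ℕ → ℕ → ℝ) (m : ℕ) [NeZero m] (v : ℕ) (i : Fin m) :
    ∑ n ∈ range v with greedyColouring w m n = greedyColouring w m v, w v n ≤
      ∑ n ∈ range v with greedyColouring w m n = i, w v n := by
  simp only [sum_filter, ← Fin.sum_univ_eq_sum_range]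
  rw [greedyColouring]
  exact (Finite.exists_min fun j : Fin m =>
    ∑ n : Fin v, if greedyColouring w m n = j then w v n else 0).choose_spec i

theorem exists_colouring_sum_range_le (w : ℕ → ℕ → ℝ) {C : ℝ}
    (hC : ∀ v, ∑ n ∈ range v, w v n ≤ C) (m : ℕ) [NeZero m] :
    ∃ c : ℕ → Fin m, ∀ v, ∑ n ∈ range v with c n = c v, w v n ≤ C / m := by
  refine ⟨greedyColouring w m, fun v => ?_⟩
  rw [le_div_iff₀ (by simp [Nat.pos_of_neZero]), mul_comm]
  calc (m : ℝ) * ∑ n ∈ range v with greedyColouring w m n = greedyColouring w m v, w v n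
      ≤ ∑ i, ∑ n ∈ range v with greedyColouring w m n = i, w v n := by
        simpa using card_nsmul_le_sum univ _ _ fun i _ => sum_greedyColouring_le w m v i
    _ = ∑ n ∈ range v, w v n := sum_fiberwise _ _ _
    _ ≤ C := hC v

theorem exists_colouring_sum_le_of_perm {M : ℕ → ℕ → ℝ} (h0 : ∀ k n, 0 ≤ M k n) {C : ℝ}
    (hC : ∀ k (s : Finset ℕ), ∑ n ∈ s, M k n ≤ C) (m : ℕ) [NeZero m] (e : Equiv.Perm ℕ) :
    ∃ c : ℕ → Fin m, ∀ k (s : Finset ℕ), (∀ n ∈ s, e n < e k ∧ c n = c k) →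
      ∑ n ∈ s, M k n ≤ C / m := by
  obtain ⟨c, hc⟩ := exists_colouring_sum_range_le (fun v n => M (e.symm v) (e.symm n))
    (fun v => by simpa [sum_map] using hC (e.symm v) ((range v).map e.symm.toEmbedding)) m
  refine ⟨c ∘ e, fun k s hs => ?_⟩
  calc ∑ n ∈ s, M k n = ∑ n ∈ s.map e.toEmbedding, M (e.symm (e k)) (e.symm n) := by simp
    _ ≤ ∑ n ∈ range (e k) with c n = c (e k), M (e.symm (e k)) (e.symm n) := by
        refine sum_le_sum_of_subset_of_nonneg ?_ fun _ _ _ => h0 _ _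
        intro x hx
        obtain ⟨n, hn, rfl⟩ := mem_map.mp hx
        simpa using hs n hn
    _ ≤ C / m := hc (e k)

theorem exists_block_sequence (N : ℕ → ℕ) :
    ∃ b : ℕ → ℕ, StrictMono b ∧ b 0 = 0 ∧ ∀ j, ∀ k < b j, N k ≤ b (j + 1) := by
  obtain ⟨f, hf_lt, hf_le⟩ : ∃ f : ℕ → ℕ, (∀ t, t < f t) ∧ ∀ t, ∀ k < t, N k ≤ f t :=
    ⟨fun t => t + 1 + (range t).sup N, fun t => by dsimp only; omega,
      fun t k hk => (le_sup (f := N) (mem_range.mpr hk)).trans (by dsimp only; omega)⟩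
  refine ⟨fun j => f^[j] 0, strictMono_nat_of_lt_succ fun j => ?_, rfl, fun j k hk => ?_⟩
  · simpa only [Function.iterate_succ_apply'] using hf_lt _
  · simpa only [Function.iterate_succ_apply'] using hf_le _ k hk

section Blocks

variable {b : ℕ → ℕ}

def blockIndex (b : ℕ → ℕ) (v : ℕ) : ℕ :=
  Nat.findGreatest (fun j => b j ≤ v) v

def blockReflect (b : ℕ → ℕ) (v : ℕ) : ℕ :=
  b (blockIndex b v) + (b (blockIndex b v + 1) - 1 - v)

theorem le_blockIndex (hb : StrictMono b) {j v : ℕ} (h : b j ≤ v) : j ≤ blockIndex b v :=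
  Nat.le_findGreatest ((hb.id_le j).trans h) h

theorem apply_blockIndex_le (hb0 : b 0 = 0) (v : ℕ) : b (blockIndex b v) ≤ v :=
  Nat.findGreatest_spec (P := fun j => b j ≤ v) (Nat.zero_le v) (by rw [hb0]; exact Nat.zero_le v)

theorem lt_apply_blockIndex_succ (hb : StrictMono b) (v : ℕ) : v < b (blockIndex b v + 1) := by
  by_contra! h
  have := le_blockIndex hb h
  omega

variable (hb : StrictMono b) (hb0 : b 0 = 0)
include hb hb0

theorem blockIndex_eq {j v : ℕ} (h₁ : b j ≤ v) (h₂ : v < b (j + 1)) : blockIndex b v = j := by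
  have := le_blockIndex hb h₁
  by_contra hne
  have := hb.monotone (show j + 1 ≤ blockIndex b v by omega)
  have := apply_blockIndex_le hb0 v
  omega

theorem blockIndex_blockReflect (v : ℕ) : blockIndex b (blockReflect b v) = blockIndex b v := by
  have := apply_blockIndex_le hb0 v
  have := lt_apply_blockIndex_succ hb v
  exact blockIndex_eq hb hb0 (by unfold blockReflect; omega) (by unfold blockReflect; omega)

theorem blockReflect_involutive : Function.Involutive (blockReflect b) := fun v => by
  have := apply_blockIndex_le hb0 v
  have := lt_apply_blockIndex_succ hb v
  rw [blockReflect, blockIndex_blockReflect hb hb0]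
  unfold blockReflect
  omega

theorem blockReflect_lt_blockReflect {k n : ℕ} (hkn : k < n) (hn : n < b (blockIndex b k + 1)) :
    blockReflect b n < blockReflect b k := by
  have hnk := blockIndex_eq hb hb0 ((apply_blockIndex_le hb0 k).trans hkn.le) hn
  have := apply_blockIndex_le hb0 k
  unfold blockReflect
  rw [hnk]
  omega

theorem apply_blockIndex_add_two_le {k n : ℕ} (hn : b (blockIndex b k + 1) ≤ n)
    (hbodd : (blockIndex b n).bodd = (blockIndex b k).bodd) : b (blockIndex b k + 2) ≤ n := by
  have hle := le_blockIndex hb hn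
  have hne : blockIndex b n ≠ blockIndex b k + 1 := fun h => by simp [h] at hbodd
  exact (hb.monotone (by omega)).trans (apply_blockIndex_le hb0 n)

end Blocks

theorem Summable.exists_tail_sum_le {f : ℕ → ℝ} (hf : Summable f) {δ : ℝ} (hδ : 0 < δ) :
    ∃ N, ∀ s : Finset ℕ, (∀ n ∈ s, N ≤ n) → ∑ n ∈ s, f n ≤ δ := by
  obtain ⟨t, ht⟩ := summable_iff_vanishing.mp hf (Set.Iic δ) (Iic_mem_nhds hδ)
  refine ⟨t.sup id + 1, fun s hs => ht s (disjoint_left.mpr fun n hns hnt => ?_)⟩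
  have := le_sup (f := id) hnt
  have := hs n hns
  simp only [id] at *
  omega

theorem fragments_iff_forall_finset {M : ℕ → ℕ → ℝ} (h0 : ∀ k n, 0 ≤ M k n)
    (hsum : ∀ k, Summable (M k)) {ε : ℝ} {A : Set ℕ} :
    Fragments M ε A ↔ ∀ k ∈ A, ∀ s : Finset ℕ, ↑s ⊆ A \ {k} → ∑ n ∈ s, M k n ≤ ε := by
  classical
  refine forall₂_congr fun k _ => ⟨fun h s hs => ?_, fun h => ?_⟩
  · calc ∑ n ∈ s, M k n = ∑ n ∈ s.subtype (· ∈ A \ {k}), M k n :=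
          (sum_subtype_of_mem _ fun n hn => hs hn).symm
      _ ≤ ∑' n : (A \ {k} : Set ℕ), M k n :=
          ((hsum k).subtype _).sum_le_tsum _ fun n _ => h0 k n
      _ ≤ ε := h
  · refine Real.tsum_le_of_sum_le (fun n => h0 k n) fun s => ?_
    simpa [sum_map] using h (s.map (Function.Embedding.subtype _))
      (by rw [coe_map]; rintro _ ⟨n, -, rfl⟩; exact n.2)

theorem Fragments.subset {M : ℕ → ℕ → ℝ} (h0 : ∀ k n, 0 ≤ M k n)
    (hsum : ∀ k, Summable (M k)) {ε : ℝ} {A A' : Set ℕ} (hA : Fragments M ε A) (h : A' ⊆ A) :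
    Fragments M ε A' := by
  rw [fragments_iff_forall_finset h0 hsum] at hA ⊢
  exact fun k hk s hs => hA k (h hk) s (hs.trans (Set.sdiff_subset_sdiff_left h))

theorem IsRosenthalMatrix.exists_sum_le {M : ℕ → ℕ → ℝ} (hM : IsRosenthalMatrix M) :
    ∃ C, ∀ k (s : Finset ℕ), ∑ n ∈ s, M k n ≤ C := by
  obtain ⟨h0, hsum, C, hC⟩ := hM
  exact ⟨C, fun k s => ((hsum k).sum_le_tsum s fun n _ => h0 k n).trans (hC ⟨k, rfl⟩)⟩

theorem IsRosenthalMatrix.exists_fragmenting_colouring {M : ℕ → ℕ → ℝ}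
    (hM : IsRosenthalMatrix M) {ε : ℝ} (hε : 0 < ε) :
    ∃ (ι : Type) (_ : Finite ι) (c : ℕ → ι), ∀ i, Fragments M ε {v | c v = i} := by
  obtain ⟨C, hC⟩ := hM.exists_sum_le
  obtain ⟨h0, hsum, -⟩ := hM
  obtain ⟨δ, hδ, rfl⟩ : ∃ δ, 0 < δ ∧ ε = 3 * δ := ⟨ε / 3, by positivity, by ring⟩
  set m := ⌈C / δ⌉₊ + 1
  have hm : C / m ≤ δ := by
    rw [div_le_iff₀ (by positivity), ← div_le_iff₀' hδ]
    exact (Nat.le_ceil _).trans (by simp [m])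
  choose N hN using fun k => (hsum k).exists_tail_sum_le hδ
  obtain ⟨b, hb, hb0, hbN⟩ := exists_block_sequence N
  obtain ⟨c₁, hc₁⟩ := exists_colouring_sum_le_of_perm h0 hC m (Equiv.refl ℕ)
  obtain ⟨c₂, hc₂⟩ :=
    exists_colouring_sum_le_of_perm h0 hC m (blockReflect_involutive hb hb0).toPerm
  refine ⟨Bool × Fin m × Fin m, inferInstance, fun v => ((blockIndex b v).bodd, c₁ v, c₂ v),
    fun i => (fragments_iff_forall_finset h0 hsum).mpr ?_⟩
  rintro k rfl s hs
  have hcol : ∀ n ∈ s, ((blockIndex b n).bodd = (blockIndex b k).bodd ∧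
      c₁ n = c₁ k ∧ c₂ n = c₂ k) ∧ n ≠ k := fun n hn => by simpa using hs hn
  set j := blockIndex b k
  rw [← sum_filter_add_sum_filter_not s (· < k),
    ← sum_filter_add_sum_filter_not (s.filter (¬ · < k)) (· < b (j + 1))]
  have hbefore : ∑ n ∈ s with n < k, M k n ≤ δ := by
    refine (hc₁ k _ fun n hn => ?_).trans hm
    rw [mem_filter] at hn
    exact ⟨hn.2, (hcol n hn.1).1.2.1⟩
  have hsame : ∑ n ∈ s.filter (¬ · < k) with n < b (j + 1), M k n ≤ δ := by
    refine (hc₂ k _ fun n hn => ?_).trans hm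
    simp only [mem_filter, not_lt] at hn
    obtain ⟨⟨-, -, hc₂n⟩, hne⟩ := hcol n hn.1.1
    exact ⟨blockReflect_lt_blockReflect hb hb0 (lt_of_le_of_ne hn.1.2 hne.symm) hn.2, hc₂n⟩
  have hafter : ∑ n ∈ s.filter (¬ · < k) with ¬ n < b (j + 1), M k n ≤ δ := by
    refine hN k _ fun n hn => ?_
    simp only [mem_filter, not_lt] at hn
    exact (hbN (j + 1) k (lt_apply_blockIndex_succ hb k)).trans
      (apply_blockIndex_add_two_le hb hb0 hn.2 (hcol n hn.1.1).1.1)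
  linarith

theorem pi_base_is_rosenthal_family_general (u : Ultrafilter ℕ)
    (B : Set (Set ℕ))
    (hbase : ∀ A ∈ u, ∃ b ∈ B, b ⊆ A)
    (M : ℕ → ℕ → ℝ) (hM : IsRosenthalMatrix M) (ε : ℝ) (hε : 0 < ε) :
    ∃ A ∈ B, Fragments M ε A := by
  obtain ⟨ι, _, c, hc⟩ := hM.exists_fragmenting_colouring hε
  obtain ⟨i, hi⟩ : ∃ i, ∀ᶠ v in u, c v = i :=
    Ultrafilter.eventually_exists_iff.mp (.of_forall fun v => ⟨c v, rfl⟩)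
  obtain ⟨A, hAB, hA⟩ := hbase _ hi
  exact ⟨A, hAB, (hc i).subset hM.1 hM.2.1 hA⟩

/-- Every `π`-base of a nonprincipal ultrafilter on `ℕ` is a Rosenthal family. -/
theorem pi_base_is_rosenthal_family (u : Ultrafilter ℕ)
    (hu : (u : Filter ℕ) ≤ Filter.cofinite)
    (B : Set (Set ℕ)) (hBinf : ∀ b ∈ B, b.Infinite)
    (hbase : ∀ A ∈ u, ∃ b ∈ B, b ⊆ A)
    (M : ℕ → ℕ → ℝ) (hM : IsRosenthalMatrix M) (ε : ℝ) (hε : 0 < ε) :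
    ∃ A ∈ B, Fragments M ε A :=
  pi_base_is_rosenthal_family_general u B hbase M hM ε hε
end

section
/- Suppose (C_ξ)_{ξ<ω₁} is an almost disjoint family of infinite subsets of ℕ, A is a Boolean algebra, (μ_k)_{k∈ℕ} are finitely additive positive measures on A with μ_k(1_A) ≤ ρ for all k and some ρ ∈ ℝ, and (A_n)_{n∈ℕ} are pairwise disjoint elements of A. Then for all but countably many ξ < ω₁ the following holds: for every k ∈ ℕ and every B ⊆ C_ξ such that the supremum ⋁_{n∈B} A_n exists in A, one has μ_k(⋁_{n∈B} A_n) = Σ_{n∈B} μ_k(A_n). -/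
/-!
Fix `μ = μ k` and `ε > 0`, and call `ξ` bad if some `B ⊆ C ξ` has a supremum `s` with
`μ s ≥ ∑_{n ∈ B} μ (A n) + ε`. For distinct bad `ξ, η` the witnesses `B_ξ, B_η` overlap in a finite
set, so removing from each `s_ξ` the finitely many `A n` shared with the other witnesses leaves
pairwise disjoint elements, each still of measure at least `ε`. Hence there are at most
`μ ⊤ / ε` bad indices, and the exceptional set is a countable union of finite sets.
-/

section

open Finset Function

variable {α β ι : Type*} [BooleanAlgebra α] {μ : α → ℝ}

namespace FinitelyAdditive

lemma map_bot (hadd : ∀ a b, Disjoint a b → μ (a ⊔ b) = μ a + μ b) : μ ⊥ = 0 := by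
  have h := hadd ⊥ ⊥ disjoint_bot_left
  rw [bot_sup_eq] at h
  linarith

lemma map_eq_inf_add_sdiff (hadd : ∀ a b, Disjoint a b → μ (a ⊔ b) = μ a + μ b) (a b : α) :
    μ a = μ (a ⊓ b) + μ (a \ b) := by
  rw [← hadd _ _ (disjoint_iff.mpr (inf_inf_sdiff a b)), sup_inf_sdiff]

lemma monotone (hpos : ∀ a, 0 ≤ μ a) (hadd : ∀ a b, Disjoint a b → μ (a ⊔ b) = μ a + μ b) :
    Monotone μ := by
  intro a b hab
  rw [map_eq_inf_add_sdiff hadd b a, inf_eq_right.mpr hab]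
  linarith [hpos (b \ a)]

lemma map_finset_sup (hadd : ∀ a b, Disjoint a b → μ (a ⊔ b) = μ a + μ b) {g : ι → α}
    (F : Finset ι) (hg : (F : Set ι).PairwiseDisjoint g) :
    μ (F.sup g) = ∑ i ∈ F, μ (g i) := by
  induction F using Finset.cons_induction with
  | empty => simpa using map_bot hadd
  | cons i F hi ih =>
    have hdisj : Disjoint (g i) (F.sup g) := Finset.disjoint_sup_right.mpr fun j hj =>
      hg (mem_coe.mpr (mem_cons_self i F)) (mem_coe.mpr (mem_cons_of_mem hj))
        (by rintro rfl; exact hi hj)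
    rw [sup_cons, sum_cons, hadd _ _ hdisj, ih (hg.subset (by simp))]

lemma card_mul_le_of_pairwise_disjoint [Fintype ι] (hpos : ∀ a, 0 ≤ μ a)
    (hadd : ∀ a b, Disjoint a b → μ (a ⊔ b) = μ a + μ b) {v : ι → α}
    (hv : Pairwise (Disjoint on v)) {ε : ℝ} (hε : ∀ i, ε ≤ μ (v i)) :
    Fintype.card ι * ε ≤ μ ⊤ :=
  calc Fintype.card ι * ε = (univ : Finset ι).card • ε := by simp
    _ ≤ ∑ i, μ (v i) := card_nsmul_le_sum _ _ _ fun i _ => hε i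
    _ = μ (univ.sup v) := (map_finset_sup hadd _ (hv.set_pairwise _)).symm
    _ ≤ μ ⊤ := monotone hpos hadd le_top

end FinitelyAdditive

lemma disjoint_of_isLUB {S : Set α} {s x : α} (hs : IsLUB S s) (hx : ∀ y ∈ S, Disjoint x y) :
    Disjoint x s :=
  le_compl_iff_disjoint_left.mp (hs.2 fun y hy => le_compl_iff_disjoint_left.mpr (hx y hy))

section SupremumOfDisjointFamily

open FinitelyAdditive

variable {A : β → α} {B : Set β} {s : α}

lemma sum_le_of_isLUB (hpos : ∀ a, 0 ≤ μ a) (hadd : ∀ a b, Disjoint a b → μ (a ⊔ b) = μ a + μ b)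
    (hA : Pairwise (Disjoint on A)) (hs : IsLUB (A '' B) s) {F : Finset β} (hF : ↑F ⊆ B) :
    ∑ n ∈ F, μ (A n) ≤ μ s := by
  rw [← map_finset_sup hadd F (hA.set_pairwise _)]
  exact monotone hpos hadd (Finset.sup_le fun n hn => hs.1 ⟨n, hF hn, rfl⟩)

lemma sum_subtype_le_of_isLUB (hpos : ∀ a, 0 ≤ μ a)
    (hadd : ∀ a b, Disjoint a b → μ (a ⊔ b) = μ a + μ b) (hA : Pairwise (Disjoint on A))
    (hs : IsLUB (A '' B) s) (u : Finset B) : ∑ n ∈ u, μ (A n) ≤ μ s := by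
  have h := sum_le_of_isLUB hpos hadd hA hs (F := u.map (Embedding.subtype _)) (by simp)
  rwa [sum_map] at h

lemma summable_of_isLUB (hpos : ∀ a, 0 ≤ μ a)
    (hadd : ∀ a b, Disjoint a b → μ (a ⊔ b) = μ a + μ b) (hA : Pairwise (Disjoint on A))
    (hs : IsLUB (A '' B) s) : Summable fun n : B => μ (A n) :=
  summable_of_sum_le (fun _ => hpos _) (sum_subtype_le_of_isLUB hpos hadd hA hs)

lemma tsum_le_of_isLUB (hpos : ∀ a, 0 ≤ μ a)
    (hadd : ∀ a b, Disjoint a b → μ (a ⊔ b) = μ a + μ b) (hA : Pairwise (Disjoint on A))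
    (hs : IsLUB (A '' B) s) : ∑' n : B, μ (A n) ≤ μ s :=
  (summable_of_isLUB hpos hadd hA hs).tsum_le_of_sum_le (sum_subtype_le_of_isLUB hpos hadd hA hs)

lemma exists_tsum_add_inv_le_of_not_hasSum (hpos : ∀ a, 0 ≤ μ a)
    (hadd : ∀ a b, Disjoint a b → μ (a ⊔ b) = μ a + μ b) (hA : Pairwise (Disjoint on A))
    (hs : IsLUB (A '' B) s) (hsum : ¬ HasSum (fun n : B => μ (A n)) (μ s)) :
    ∃ q : ℕ, ∑' n : B, μ (A n) + 1 / (q + 1) ≤ μ s := by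
  have hlt : ∑' n : B, μ (A n) < μ s :=
    (tsum_le_of_isLUB hpos hadd hA hs).lt_of_ne
      fun h => hsum (h ▸ (summable_of_isLUB hpos hadd hA hs).hasSum)
  obtain ⟨q, hq⟩ := exists_nat_one_div_lt (sub_pos.mpr hlt)
  exact ⟨q, by linarith⟩

lemma le_tsum_add_sdiff_of_isLUB (hpos : ∀ a, 0 ≤ μ a)
    (hadd : ∀ a b, Disjoint a b → μ (a ⊔ b) = μ a + μ b) (hA : Pairwise (Disjoint on A))
    (hs : IsLUB (A '' B) s) {F : Finset β} (hF : ↑F ⊆ B) :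
    μ s ≤ ∑' n : B, μ (A n) + μ (s \ F.sup A) := by
  classical
  have hF_le : ∑ n ∈ F, μ (A n) ≤ ∑' n : B, μ (A n) := by
    rw [← sum_subtype_of_mem (fun n => μ (A n)) fun n hn => hF hn]
    exact (summable_of_isLUB hpos hadd hA hs).sum_le_tsum _ fun _ _ => hpos _
  calc μ s = μ (s ⊓ F.sup A) + μ (s \ F.sup A) := map_eq_inf_add_sdiff hadd _ _
    _ ≤ μ (F.sup A) + μ (s \ F.sup A) := by gcongr; exact monotone hpos hadd inf_le_right
    _ = ∑ n ∈ F, μ (A n) + μ (s \ F.sup A) := by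
      rw [map_finset_sup hadd F (hA.set_pairwise _)]
    _ ≤ ∑' n : B, μ (A n) + μ (s \ F.sup A) := by gcongr

lemma disjoint_sdiff_sup_of_isLUB (hA : Pairwise (Disjoint on A)) {B' : Set β} {s' : α}
    (hs : IsLUB (A '' B) s) (hs' : IsLUB (A '' B') s') {F : Finset β} (hF : B ∩ B' ⊆ F) :
    Disjoint (s \ F.sup A) s' := by
  refine disjoint_of_isLUB hs' ?_
  rintro _ ⟨n, hn', rfl⟩
  by_cases hn : n ∈ B
  · exact disjoint_sdiff_self_left.mono_right (le_sup (hF ⟨hn, hn'⟩))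
  · refine (disjoint_of_isLUB hs ?_).symm.mono_left sdiff_le
    rintro _ ⟨m, hm, rfl⟩
    exact hA fun h => hn (h ▸ hm)

end SupremumOfDisjointFamily

section AlmostDisjoint

variable {A : β → α}

lemma card_mul_le_of_almost_disjoint [Fintype ι] (hpos : ∀ a, 0 ≤ μ a)
    (hadd : ∀ a b, Disjoint a b → μ (a ⊔ b) = μ a + μ b) (hA : Pairwise (Disjoint on A))
    {B : ι → Set β} (hB : Pairwise fun i j => (B i ∩ B j).Finite) {s : ι → α}
    (hs : ∀ i, IsLUB (A '' B i) (s i)) {ε : ℝ} (hgap : ∀ i, ∑' n : B i, μ (A n) + ε ≤ μ (s i)) :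
    Fintype.card ι * ε ≤ μ ⊤ := by
  have hfin : ∀ i, (⋃ j ∈ ({i}ᶜ : Set ι), B i ∩ B j).Finite := fun i =>
    (Set.toFinite _).biUnion fun j hj => hB (Ne.symm hj)
  set F : ι → Finset β := fun i => (hfin i).toFinset
  have hFB : ∀ i, ↑(F i) ⊆ B i := fun i n hn => by
    obtain ⟨j, -, hn, -⟩ := Set.mem_iUnion₂.mp ((hfin i).mem_toFinset.mp hn)
    exact hn
  refine FinitelyAdditive.card_mul_le_of_pairwise_disjoint hpos hadd
    (v := fun i => s i \ (F i).sup A) (fun i j hij => ?_) fun i => ?_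
  · refine (disjoint_sdiff_sup_of_isLUB hA (hs i) (hs j) fun n hn => ?_).mono_right sdiff_le
    exact (hfin i).mem_toFinset.mpr (Set.mem_iUnion₂.mpr ⟨j, Ne.symm hij, hn⟩)
  · linarith [le_tsum_add_sdiff_of_isLUB hpos hadd hA (hs i) (hFB i), hgap i]

lemma finite_setOf_tsum_add_le_of_almost_disjoint (hpos : ∀ a, 0 ≤ μ a)
    (hadd : ∀ a b, Disjoint a b → μ (a ⊔ b) = μ a + μ b) (hA : Pairwise (Disjoint on A))
    (C : ι → Set β) (hC : Pairwise fun i j => (C i ∩ C j).Finite) {ε : ℝ} (hε : 0 < ε) :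
    {i | ∃ B ⊆ C i, ∃ s, IsLUB (A '' B) s ∧ ∑' n : B, μ (A n) + ε ≤ μ s}.Finite := by
  by_contra hinf
  obtain ⟨N, hN⟩ := exists_nat_gt (μ ⊤ / ε)
  obtain ⟨T, hT, rfl⟩ := Set.Infinite.exists_subset_card_eq hinf N
  choose B hBC s hs hgap using fun i : T => hT i.2
  have hB : Pairwise fun i j : T => (B i ∩ B j).Finite := fun i j hij =>
    (hC (Subtype.coe_injective.ne hij)).subset (Set.inter_subset_inter (hBC i) (hBC j))
  have hcard := card_mul_le_of_almost_disjoint hpos hadd hA hB hs hgap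
  rw [Fintype.card_coe] at hcard
  linarith [(div_lt_iff₀ hε).mp hN]

end AlmostDisjoint

end

theorem avoiding_boundary_general {α : Type*} [BooleanAlgebra α]
    (C : {ξ : Ordinal // ξ < (Cardinal.aleph 1).ord} → Set ℕ)
    (hCad : ∀ ξ η, ξ ≠ η → (C ξ ∩ C η).Finite)
    (μ : ℕ → α → ℝ)
    (hμpos : ∀ k a, 0 ≤ μ k a)
    (hμadd : ∀ k a b, a ⊓ b = ⊥ → μ k (a ⊔ b) = μ k a + μ k b)
    (A : ℕ → α) (hAdisj : ∀ m n, m ≠ n → A m ⊓ A n = ⊥) :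
    {ξ | ¬ ∀ k : ℕ, ∀ B ⊆ C ξ, ∀ s : α, IsLUB (A '' B) s →
        HasSum (fun n : B => μ k (A n)) (μ k s)}.Countable := by
  have hadd : ∀ k a b, Disjoint a b → μ k (a ⊔ b) = μ k a + μ k b :=
    fun k a b h => hμadd k a b h.eq_bot
  have hA : Pairwise fun m n => Disjoint (A m) (A n) := fun m n h => disjoint_iff.mpr (hAdisj m n h)
  refine (Set.countable_iUnion fun k => Set.countable_iUnion fun q : ℕ =>
    (finite_setOf_tsum_add_le_of_almost_disjoint (hμpos k) (hadd k) hA C hCad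
      (ε := 1 / (q + 1)) (by positivity)).countable).mono ?_
  intro ξ hξ
  simp only [Set.mem_ofPred_eq, not_forall] at hξ
  obtain ⟨k, B, hB, s, hs, hsum⟩ := hξ
  obtain ⟨q, hq⟩ := exists_tsum_add_inv_le_of_not_hasSum (hμpos k) (hadd k) hA hs hsum
  exact Set.mem_iUnion₂.mpr ⟨k, q, B, hB, s, hs, hq⟩

/-- For an `ω₁`-indexed almost disjoint family `(C ξ)_{ξ<ω₁}` of infinite subsets of `ℕ`,
a uniformly bounded sequence `(μ k)_{k∈ℕ}` of finitely additive positive measures on a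
Boolean algebra `α` and a sequence `(A n)_{n∈ℕ}` of pairwise disjoint elements of `α`:
for all but countably many `ξ < ω₁`, for every `k ∈ ℕ` and every `B ⊆ C ξ` such that
`⋁_{n ∈ B} A n` exists in `α`, we have `μ k (⋁_{n ∈ B} A n) = Σ_{n ∈ B} μ k (A n)`. -/
theorem avoiding_boundary {α : Type*} [BooleanAlgebra α]
    (C : {ξ : Ordinal // ξ < (Cardinal.aleph 1).ord} → Set ℕ)
    (hCinf : ∀ ξ, (C ξ).Infinite)
    (hCad : ∀ ξ η, ξ ≠ η → (C ξ ∩ C η).Finite)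
    (μ : ℕ → α → ℝ)
    (hμpos : ∀ k a, 0 ≤ μ k a)
    (hμadd : ∀ k a b, a ⊓ b = ⊥ → μ k (a ⊔ b) = μ k a + μ k b)
    (ρ : ℝ) (hμbdd : ∀ k, μ k ⊤ ≤ ρ)
    (A : ℕ → α) (hAdisj : ∀ m n, m ≠ n → A m ⊓ A n = ⊥) :
    {ξ | ¬ ∀ k : ℕ, ∀ B ⊆ C ξ, ∀ s : α, IsLUB (A '' B) s →
        HasSum (fun n : B => μ k (A n)) (μ k s)}.Countable :=
  avoiding_boundary_general C hCad μ hμpos hμadd A hAdisj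
end

section
/- If F is a nowhere reaping family of infinite subsets of ℕ, then there exists a function f : ℕ → ℕ with no fixed points such that f[A] = ℕ for every A ∈ F; in particular, F is not a binary Rosenthal family. -/
/-!
Iterating the nowhere reaping property from `ℕ` downwards gives a decreasing sequence
`D₀ = ℕ ⊇ D₁ ⊇ ⋯` in which every member of `F` meets each difference `Dₙ \ Dₙ₊₁` infinitely.
These differences are pairwise disjoint, so the map sending each point of `Dₙ \ Dₙ₊₁` other
than `n` to `n` extends to a fixed-point-free map, and it maps every `A ∈ F` onto `ℕ`.
A map with `f[A] = ℕ` can never satisfy `f[A] ∩ A = ∅` for nonempty `A`.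
-/

/-- A family `F` of infinite subsets of `ℕ` is *nowhere reaping* if for every infinite
`B ⊆ ℕ` such that `A ∩ B` is infinite for all `A ∈ F`, there is `C ⊆ B` such that
`A ∩ B ∩ C` and `(A ∩ B) \ C` are both infinite for all `A ∈ F`. -/
def NowhereReaping (F : Set (Set ℕ)) : Prop :=
  ∀ B : Set ℕ, B.Infinite → (∀ A ∈ F, (A ∩ B).Infinite) →
    ∃ C ⊆ B, ∀ A ∈ F, (A ∩ B ∩ C).Infinite ∧ ((A ∩ B) \ C).Infinite

/-- A *binary Rosenthal family*: a family of infinite subsets of `ℕ` such that for every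
fixed-point-free `f : ℕ → ℕ` there is `A` in the family with `f[A] ∩ A = ∅`. -/
def IsBinaryRosenthalFamily (F : Set (Set ℕ)) : Prop :=
  (∀ A ∈ F, A.Infinite) ∧
    ∀ f : ℕ → ℕ, (∀ n, f n ≠ n) → ∃ A ∈ F, f '' A ∩ A = ∅

open Set Function

theorem exists_pairwise_disjoint_of_split {α : Type*} (P : Set α → Prop)
    (hsplit : ∀ D, P D → ∃ C ⊆ D, P C ∧ P (D \ C)) {D₀ : Set α} (h₀ : P D₀) :
    ∃ B : ℕ → Set α, Pairwise (Disjoint on B) ∧ ∀ n, P (B n) := by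
  choose next hnext_sub hnext_P hdiff_P using fun D : {D // P D} => hsplit D.1 D.2
  let D : ℕ → {D // P D} := fun n => (fun E => ⟨next E, hnext_P E⟩)^[n] ⟨D₀, h₀⟩
  have hD_succ : ∀ n, (D (n + 1)).1 = next (D n) := fun n =>
    congrArg Subtype.val (iterate_succ_apply' _ n _)
  have hD_anti : Antitone fun n => (D n).1 := antitone_nat_of_succ_le fun n =>
    (hD_succ n).symm ▸ hnext_sub (D n)
  refine ⟨fun n => (D n).1 \ (D (n + 1)).1, ?_, fun n => by
    simpa only [hD_succ] using hdiff_P (D n)⟩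
  refine (pairwise_disjoint_on _).2 fun m n hmn => disjoint_left.2 fun x hxm hxn => ?_
  exact hxm.2 (hD_anti hmn hxn.1)

theorem NowhereReaping.exists_split {F : Set (Set ℕ)} (hF : NowhereReaping F) {D : Set ℕ}
    (hD : ∀ A ∈ F, (A ∩ D).Infinite) :
    ∃ C ⊆ D, (∀ A ∈ F, (A ∩ C).Infinite) ∧ ∀ A ∈ F, (A ∩ (D \ C)).Infinite := by
  rcases F.eq_empty_or_nonempty with rfl | ⟨A₀, hA₀⟩
  · exact ⟨∅, empty_subset D, by simp, by simp⟩
  obtain ⟨C, hCD, hC⟩ := hF D ((hD A₀ hA₀).mono inter_subset_right) hD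
  refine ⟨C, hCD, fun A hA => ?_, fun A hA => ?_⟩
  · exact (hC A hA).1.mono fun x hx => ⟨hx.1.1, hx.2⟩
  · exact (hC A hA).2.mono fun x hx => ⟨hx.1.1, hx.1.2, hx.2⟩

theorem exists_ne_self_and_eq_of_mem_pairwise_disjoint {α : Type*} [Nontrivial α]
    {B : α → Set α} (hB : Pairwise (Disjoint on B)) :
    ∃ f : α → α, (∀ x, f x ≠ x) ∧ ∀ n, ∀ x ∈ B n, x ≠ n → f x = n := by
  classical
  choose g hg using fun x : α => exists_ne x
  have hunique : ∀ {m n x}, x ∈ B m → x ∈ B n → m = n := fun hm hn =>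
    by_contra fun hne => disjoint_left.1 (hB hne) hm hn
  refine ⟨fun x => if h : ∃ n, x ∈ B n ∧ x ≠ n then h.choose else g x, fun x => ?_,
    fun n x hxn hx => ?_⟩
  · dsimp only
    split_ifs with h
    · exact fun hfx => h.choose_spec.2 hfx.symm
    · exact hg x
  · have h : ∃ n, x ∈ B n ∧ x ≠ n := ⟨n, hxn, hx⟩
    dsimp only
    rw [dif_pos h]
    exact hunique h.choose_spec.1 hxn

theorem not_isBinaryRosenthalFamily_of_image_eq_univ {F : Set (Set ℕ)} {f : ℕ → ℕ}
    (hf : ∀ n, f n ≠ n) (hfF : ∀ A ∈ F, f '' A = univ) : ¬ IsBinaryRosenthalFamily F := by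
  rintro ⟨hinf, hros⟩
  obtain ⟨A, hA, hAe⟩ := hros f hf
  rw [hfF A hA, univ_inter] at hAe
  exact (hinf A hA).nonempty.ne_empty hAe

/-- If `F` is a nowhere reaping family of infinite subsets of `ℕ`, then there is a
fixed-point-free `f : ℕ → ℕ` with `f[A] = ℕ` for every `A ∈ F`; in particular `F` is not
a binary Rosenthal family. -/
theorem nowhereReaping_not_binary_rosenthal (F : Set (Set ℕ))
    (hFinf : ∀ A ∈ F, A.Infinite) (hF : NowhereReaping F) :
    (∃ f : ℕ → ℕ, (∀ n, f n ≠ n) ∧ ∀ A ∈ F, f '' A = Set.univ) ∧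
      ¬ IsBinaryRosenthalFamily F := by
  obtain ⟨B, hB_disj, hB⟩ := exists_pairwise_disjoint_of_split
    (fun D => ∀ A ∈ F, (A ∩ D).Infinite) (fun _ hD => hF.exists_split hD)
    (D₀ := univ) (by simpa using hFinf)
  obtain ⟨f, hf, hfB⟩ := exists_ne_self_and_eq_of_mem_pairwise_disjoint hB_disj
  have hfF : ∀ A ∈ F, f '' A = univ := fun A hA => eq_univ_of_forall fun n => by
    obtain ⟨x, ⟨hxA, hxB⟩, hxn⟩ := ((hB n A hA).sdiff (finite_singleton n)).nonempty
    exact ⟨x, hxA, hfB n x hxB hxn⟩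
  exact ⟨⟨f, hf, hfF⟩, not_isBinaryRosenthalFamily_of_image_eq_univ hf hfF⟩
end

section
/- No Rosenthal family of cardinality smaller than the ultrafilter number 𝔲 has the strong finite intersection property; consequently no binary Rosenthal family of cardinality smaller than 𝔲 has the strong finite intersection property. -/
/-- A *Rosenthal family*: a family of infinite subsets of `ℕ` such that every Rosenthal
matrix is `ε`-fragmented by some member of the family, for every `ε > 0`. -/
def IsRosenthalFamily (F : Set (Set ℕ)) : Prop :=
  (∀ A ∈ F, A.Infinite) ∧
    ∀ M : ℕ → ℕ → ℝ, IsRosenthalMatrix M → ∀ ε : ℝ, 0 < ε → ∃ A ∈ F, Fragments M ε A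

/-- `F` has the strong finite intersection property: every finite subfamily has infinite
intersection. -/
def SFIP (F : Set (Set ℕ)) : Prop :=
  ∀ G : Finset (Set ℕ), ↑G ⊆ F → (⋂₀ (G : Set (Set ℕ))).Infinite

/-- The ultrafilter number `𝔲`: the minimal cardinality of a base of a nonprincipal
ultrafilter on `ℕ`. -/
noncomputable def ultrafilterNumber : Cardinal :=
  sInf {c | ∃ u : Ultrafilter ℕ, (u : Filter ℕ) ≤ Filter.cofinite ∧
    ∃ B : Set (Set ℕ), (∀ b ∈ B, b ∈ u) ∧ (∀ X ∈ u, ∃ b ∈ B, b ⊆ X) ∧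
      Cardinal.mk B = c}

/-!
Let `l` be the filter generated by `F` together with the cofinite filter; the strong finite
intersection property says exactly that `l ≠ ⊥`. Call `W` positive when `l ⊓ 𝓟 W ≠ ⊥`.
If some positive `W` cannot be split into two positive pieces, `l ⊓ 𝓟 W` is a nonprincipal
ultrafilter with a base of size `max ℵ₀ #F`, and since `𝔲` is uncountable this gives `𝔲 ≤ #F`.
Otherwise repeated splitting yields pairwise disjoint positive sets `Vₙ`. The fixed-point-free
map sending `Vₙ \ {n}` to `n` defeats every `A ∈ F`: such an `A` meets each `Vₙ \ {n}`, so
`f[A]` is all of `ℕ` and cannot avoid `A`. Finally, a Rosenthal family is binary: apply it to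
the `0/1` matrix of the graph of `f` with `ε = 1/2`.
-/

open Filter Set Cardinal Function

theorem Ultrafilter.not_isCountablyGenerated_of_le_cofinite (u : Ultrafilter ℕ)
    (hu : (u : Filter ℕ) ≤ cofinite) : ¬ (u : Filter ℕ).IsCountablyGenerated := by
  intro _
  obtain ⟨x, hx⟩ := exists_seq_tendsto (u : Filter ℕ)
  obtain ⟨φ, hφ, hxφ⟩ := strictMono_subseq_of_tendsto_atTop
    (Nat.cofinite_eq_atTop ▸ hx.mono_right hu)
  have ht : Tendsto (x ∘ φ) atTop u := hx.comp hφ.tendsto_atTop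
  -- `u` can contain neither the even-indexed terms of `x ∘ φ` nor their complement.
  have heven : ∀ n, (x ∘ φ) n ∈ (x ∘ φ) '' {n | Even n} ↔ Even n :=
    fun n => hxφ.injective.mem_set_image
  rcases u.mem_or_compl_mem ((x ∘ φ) '' {n | Even n}) with hE | hE
  · obtain ⟨n, hodd, hn⟩ := (Nat.frequently_odd.and_eventually (ht.eventually_mem hE)).exists
    exact Nat.not_even_iff_odd.2 hodd ((heven n).1 hn)
  · obtain ⟨n, heven', hn⟩ :=
      (Nat.frequently_even.and_eventually (ht.eventually_mem hE)).exists
    exact hn ((heven n).2 heven')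

theorem aleph0_lt_ultrafilterNumber : ℵ₀ < ultrafilterNumber := by
  have hne : {c | ∃ u : Ultrafilter ℕ, (u : Filter ℕ) ≤ Filter.cofinite ∧
      ∃ B : Set (Set ℕ), (∀ b ∈ B, b ∈ u) ∧ (∀ X ∈ u, ∃ b ∈ B, b ⊆ X) ∧
        Cardinal.mk B = c}.Nonempty :=
    ⟨_, hyperfilter ℕ, hyperfilter_le_cofinite, (hyperfilter ℕ : Filter ℕ).sets,
      fun _ hb => hb, fun X hX => ⟨X, hX, subset_rfl⟩, rfl⟩
  obtain ⟨u, hu, B, hBu, hB, hcard⟩ := csInf_mem hne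
  rw [ultrafilterNumber, ← hcard, ← not_le, le_aleph0_iff_set_countable]
  intro hBc
  have hbasis : (u : Filter ℕ).HasBasis (· ∈ B) id :=
    ⟨fun X => ⟨fun hX => hB X hX, fun ⟨b, hb, hbX⟩ => mem_of_superset (hBu b hb) hbX⟩⟩
  exact u.not_isCountablyGenerated_of_le_cofinite hu
    (HasCountableBasis.isCountablyGenerated ⟨hbasis, hBc⟩)

theorem ultrafilterNumber_le_mk_of_hasBasis {ι : Type} {p : ι → Prop} {s : ι → Set ℕ}
    (u : Ultrafilter ℕ) (hu : (u : Filter ℕ) ≤ cofinite) (h : (u : Filter ℕ).HasBasis p s) :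
    ultrafilterNumber ≤ #{i // p i} := by
  refine (csInf_le' ⟨u, hu, s '' {i | p i}, ?_, ?_, rfl⟩ : ultrafilterNumber ≤ _).trans
    mk_image_le
  · rintro _ ⟨i, hi, rfl⟩
    exact h.mem_of_mem hi
  · intro X hX
    obtain ⟨i, hi, hiX⟩ := h.mem_iff.1 hX
    exact ⟨s i, mem_image_of_mem s hi, hiX⟩

theorem mk_finite_subset_le {α : Type*} (F : Set α) :
    #{t : Set α // t.Finite ∧ t ⊆ F} ≤ max ℵ₀ #F := by
  refine (mk_le_of_surjective (f := fun l : List F =>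
    ⟨Subtype.val '' {x | x ∈ l}, l.finite_toSet.image _, by rintro _ ⟨x, -, rfl⟩; exact x.2⟩)
    ?_).trans (mk_list_le_max F)
  rintro ⟨t, ht, htF⟩
  have hfin : (Subtype.val ⁻¹' t : Set F).Finite := ht.preimage Subtype.val_injective.injOn
  refine ⟨hfin.toFinset.toList, Subtype.ext ?_⟩
  simp only [Finset.mem_toList, Finite.mem_toFinset, ofPred_mem_eq, Subtype.image_preimage_coe,
    inter_eq_right.2 htF]

theorem SFIP.neBot_generate_inf_cofinite {F : Set (Set ℕ)} (hF : SFIP F) :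
    (generate F ⊓ cofinite).NeBot := by
  refine ((hasBasis_generate F).inf hasBasis_cofinite).neBot_iff.2 ?_
  rintro ⟨t, s⟩ ⟨⟨ht, htF⟩, hs⟩
  have hinf := hF ht.toFinset (by simpa using htF)
  rw [ht.coe_toFinset] at hinf
  exact (hinf.sdiff hs).nonempty

theorem ultrafilterNumber_le_max_of_coe_eq {F : Set (Set ℕ)} {W : Set ℕ} (u : Ultrafilter ℕ)
    (hu : (u : Filter ℕ) = generate F ⊓ cofinite ⊓ 𝓟 W) : ultrafilterNumber ≤ max ℵ₀ #F := by
  have hbasis := ((hasBasis_generate F).inf (Nat.cofinite_eq_atTop ▸ atTop_basis)).inf_principal W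
  refine (ultrafilterNumber_le_mk_of_hasBasis u (hu ▸ inf_le_left.trans inf_le_right)
    (hu ▸ hbasis)).trans ?_
  calc #{i : Set (Set ℕ) × ℕ // (i.1.Finite ∧ i.1 ⊆ F) ∧ True}
      ≤ #({t : Set (Set ℕ) // t.Finite ∧ t ⊆ F} × ℕ) :=
        mk_le_of_injective (f := fun i => (⟨i.1.1, i.2.1⟩, i.1.2)) fun i j hij => by
          simp only [Prod.mk.injEq, Subtype.mk.injEq] at hij
          exact Subtype.ext (Prod.ext hij.1 hij.2)
    _ = #{t : Set (Set ℕ) // t.Finite ∧ t ⊆ F} * ℵ₀ := by simp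
    _ ≤ max ℵ₀ #F * ℵ₀ := mul_le_mul_left (mk_finite_subset_le F) _
    _ ≤ max ℵ₀ #F := (mul_le_max_of_aleph0_le_left (le_max_left _ _)).trans (by simp)

theorem Filter.exists_ultrafilter_coe_eq {α : Type*} {g : Filter α} [g.NeBot]
    (h : ∀ s, (g ⊓ 𝓟 s).NeBot → g ⊓ 𝓟 sᶜ = ⊥) : ∃ u : Ultrafilter α, (u : Filter α) = g := by
  refine ⟨Ultrafilter.ofComplNotMemIff g fun s => ⟨fun hs => ?_, compl_notMem⟩, rfl⟩
  have hsc := h s ⟨mt inf_principal_eq_bot.1 hs⟩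
  rwa [inf_principal_eq_bot, compl_compl] at hsc

theorem exists_pairwise_disjoint_of_forall_split {α : Type*} {p : Set α → Prop} (huniv : p univ)
    (hsplit : ∀ W, p W → ∃ Z, p (W ∩ Z) ∧ p (W \ Z)) :
    ∃ V : ℕ → Set α, (∀ n, p (V n)) ∧ Pairwise (Disjoint on V) := by
  choose! Z hZ using hsplit
  set T : ℕ → Set α := fun n => (fun W => W \ Z W)^[n] univ
  have hT_succ : ∀ n, T (n + 1) = T n \ Z (T n) := fun n => iterate_succ_apply' _ _ _
  have hT : ∀ n, p (T n) := by
    intro n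
    induction n with
    | zero => exact huniv
    | succ n ih => rw [hT_succ]; exact (hZ _ ih).2
  have hT_anti : Antitone T :=
    antitone_nat_of_succ_le fun n => (hT_succ n).subset.trans sdiff_subset
  refine ⟨fun n => T n ∩ Z (T n), fun n => (hZ _ (hT n)).1, (pairwise_disjoint_on _).2 ?_⟩
  intro m n hmn
  have hn : T n ⊆ T m \ Z (T m) := hT_succ m ▸ hT_anti (Nat.succ_le_of_lt hmn)
  exact disjoint_left.2 fun x hxm hxn => (hn hxn.1).2 hxm.2

theorem exists_fixedPointFree_eq_of_mem {V : ℕ → Set ℕ} (hV : Pairwise (Disjoint on V)) :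
    ∃ f : ℕ → ℕ, (∀ x, f x ≠ x) ∧ ∀ n, ∀ x ∈ V n, x ≠ n → f x = n := by
  classical
  refine ⟨fun x => if h : ∃ n, x ∈ V n ∧ x ≠ n then h.choose else x + 1, fun x => ?_, ?_⟩
  · dsimp only
    split_ifs with h
    · exact h.choose_spec.2.symm
    · exact Nat.succ_ne_self x
  · intro n x hx hxn
    have h : ∃ n, x ∈ V n ∧ x ≠ n := ⟨n, hx, hxn⟩
    simp only [dif_pos h]
    by_contra hne
    exact disjoint_left.1 (hV hne) h.choose_spec.1 hx

theorem IsBinaryRosenthalFamily.exists_inter_subset_singleton {F : Set (Set ℕ)}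
    (hF : IsBinaryRosenthalFamily F) {V : ℕ → Set ℕ} (hV : Pairwise (Disjoint on V)) :
    ∃ A ∈ F, ∃ n, A ∩ V n ⊆ {n} := by
  obtain ⟨f, hf_ne, hf_eq⟩ := exists_fixedPointFree_eq_of_mem hV
  obtain ⟨A, hAF, hA⟩ := hF.2 f hf_ne
  obtain ⟨a, ha⟩ := (hF.1 A hAF).nonempty
  refine ⟨A, hAF, a, fun x ⟨hxA, hxV⟩ => by_contra fun hxa => ?_⟩
  exact (eq_empty_iff_forall_notMem.1 hA) a ⟨⟨x, hxA, hf_eq a x hxV hxa⟩, ha⟩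

theorem IsRosenthalFamily.isBinaryRosenthalFamily {F : Set (Set ℕ)} (hF : IsRosenthalFamily F) :
    IsBinaryRosenthalFamily F := by
  classical
  refine ⟨hF.1, fun f hf => ?_⟩
  set M : ℕ → ℕ → ℝ := fun k n => if n = f k then 1 else 0
  have hM : IsRosenthalMatrix M := by
    refine ⟨fun k n => ite_nonneg zero_le_one le_rfl,
      fun k => (hasSum_ite_eq (f k) 1).summable, 1, ?_⟩
    rintro _ ⟨k, rfl⟩
    exact (tsum_ite_eq (f k) (fun _ => (1 : ℝ))).le
  obtain ⟨A, hAF, hA⟩ := hF.2 M hM (1 / 2) (by norm_num)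
  refine ⟨A, hAF, eq_empty_iff_forall_notMem.2 ?_⟩
  rintro _ ⟨⟨k, hk, rfl⟩, hfk⟩
  have hle : M k (f k) ≤ ∑' n : (A \ {k} : Set ℕ), M k n :=
    ((hasSum_ite_eq (f k) 1).summable.subtype _).le_tsum ⟨f k, hfk, hf k⟩
      fun _ _ => ite_nonneg zero_le_one le_rfl
  have : (1 : ℝ) ≤ 1 / 2 := by simpa [M] using hle.trans (hA k hk)
  norm_num at this

theorem IsBinaryRosenthalFamily.exists_not_neBot_inf_principal {F : Set (Set ℕ)}
    (hF : IsBinaryRosenthalFamily F) {V : ℕ → Set ℕ} (hV : Pairwise (Disjoint on V)) :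
    ∃ n, ¬(generate F ⊓ cofinite ⊓ 𝓟 (V n)).NeBot := by
  obtain ⟨A, hAF, n, hAV⟩ := hF.exists_inter_subset_singleton hV
  refine ⟨n, fun _ => ?_⟩
  have hmem : A ∩ V n ∈ generate F ⊓ cofinite ⊓ 𝓟 (V n) :=
    inter_mem_inf (mem_inf_of_left (mem_generate_of_mem hAF)) (mem_principal_self _)
  have hinf : (A ∩ V n).Infinite := frequently_cofinite_iff_infinite.1
    ((Eventually.frequently hmem).filter_mono (inf_le_left.trans inf_le_right))
  exact hinf ((finite_singleton n).subset hAV)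

theorem IsBinaryRosenthalFamily.not_sfip_of_mk_lt {F : Set (Set ℕ)}
    (hF : IsBinaryRosenthalFamily F) (hlt : #F < ultrafilterNumber) : ¬SFIP F := by
  intro hS
  set l := generate F ⊓ cofinite
  have : l.NeBot := hS.neBot_generate_inf_cofinite
  by_cases hsplit :
      ∀ W, (l ⊓ 𝓟 W).NeBot → ∃ Z, (l ⊓ 𝓟 (W ∩ Z)).NeBot ∧ (l ⊓ 𝓟 (W \ Z)).NeBot
  · obtain ⟨V, hV, hVdisj⟩ := exists_pairwise_disjoint_of_forall_split
      (p := fun W => (l ⊓ 𝓟 W).NeBot) (by simpa) hsplit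
    obtain ⟨n, hn⟩ := hF.exists_not_neBot_inf_principal hVdisj
    exact hn (hV n)
  · push Not at hsplit
    obtain ⟨W, hW, hatom⟩ := hsplit
    obtain ⟨u, hu⟩ := exists_ultrafilter_coe_eq (g := l ⊓ 𝓟 W)
      (by simpa only [inf_assoc, inf_principal, sdiff_eq] using hatom)
    rcases le_max_iff.1 (ultrafilterNumber_le_max_of_coe_eq u hu) with h | h
    · exact aleph0_lt_ultrafilterNumber.not_ge h
    · exact hlt.not_ge h

/-- No Rosenthal family of cardinality smaller than `𝔲` has the strong finite intersection
property; consequently the same holds for binary Rosenthal families. -/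
theorem no_small_rosenthal_family_with_sfip :
    (∀ F : Set (Set ℕ), IsRosenthalFamily F → Cardinal.mk F < ultrafilterNumber → ¬ SFIP F) ∧
      (∀ F : Set (Set ℕ), IsBinaryRosenthalFamily F → Cardinal.mk F < ultrafilterNumber →
        ¬ SFIP F) :=
  ⟨fun _ hF => hF.isBinaryRosenthalFamily.not_sfip_of_mk_lt, fun _ hF => hF.not_sfip_of_mk_lt⟩
end

section
/- The reaping number 𝔯 is less than or equal to the binary Rosenthal number ros_01. -/
/-- The binary Rosenthal number `ros_01`: the minimal cardinality of a binary Rosenthal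
family. -/
noncomputable def binaryRosenthalNumber : Cardinal :=
  sInf {c | ∃ F : Set (Set ℕ), IsBinaryRosenthalFamily F ∧ Cardinal.mk F = c}

/-- The reaping number `𝔯`: the minimal cardinality of a family `F` of infinite subsets of
`ℕ` such that no single `X ⊆ ℕ` splits all members of `F` (i.e. there is no `X` with both
`A ∩ X` and `A \ X` infinite for all `A ∈ F`). -/
noncomputable def reapingNumber : Cardinal :=
  sInf {c | ∃ F : Set (Set ℕ), (∀ A ∈ F, A.Infinite) ∧
    (¬ ∃ X : Set ℕ, ∀ A ∈ F, (A ∩ X).Infinite ∧ (A \ X).Infinite) ∧ Cardinal.mk F = c}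

/-!
If `#F < 𝔯`, every family `{A ∩ D | A ∈ F}` of infinite sets is split by some `X`; splitting
repeatedly yields pairwise disjoint `E₀, E₁, …` each meeting every member of `F` in an infinite
set. The fixed-point-free map sending each point of `Eₙ \ {n}` to `n` then has no free set
in `F`, because any `A ∈ F` containing `n` also contains a point of `Eₙ \ {n}`. The infimum
defining `ros_01` is over a nonempty set, since every fixed-point-free map on `ℕ` has an
infinite free set.
-/

open Cardinal Function Set

/-- Pick `a₀ < a₁ < ⋯` greedily, each `aⱼ` and `f aⱼ` above the bound `cⱼ`, which in turn lies
above every earlier `aᵢ` and `f aᵢ`. -/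
lemma exists_infinite_image_inter_eq_empty_of_unbounded {f : ℕ → ℕ} (hf : ∀ n, f n ≠ n)
    (hunb : ∀ m, ∃ x, m < x ∧ m < f x) : ∃ A : Set ℕ, A.Infinite ∧ f '' A ∩ A = ∅ := by
  choose g hg using hunb
  set c : ℕ → ℕ := fun n => (fun m => max (g m) (f (g m)))^[n] 0
  have hc_succ : ∀ n, c (n + 1) = max (g (c n)) (f (g (c n))) := fun n =>
    iterate_succ_apply' _ _ _
  have hc_mono : Monotone c := monotone_nat_of_le_succ fun n => by
    rw [hc_succ]; exact ((hg (c n)).1.le.trans (le_max_left _ _))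
  have hc_bound : ∀ {i j}, i < j → g (c i) ≤ c j ∧ f (g (c i)) ≤ c j := fun {i j} hij => by
    have := hc_mono (Nat.succ_le_of_lt hij)
    rw [hc_succ] at this
    exact ⟨(le_max_left _ _).trans this, (le_max_right _ _).trans this⟩
  have hmono : StrictMono (g ∘ c) := fun i j hij =>
    (hc_bound hij).1.trans_lt (hg (c j)).1
  refine ⟨range (g ∘ c), infinite_range_of_injective hmono.injective, ?_⟩
  rw [eq_empty_iff_forall_notMem]
  rintro _ ⟨⟨_, ⟨i, rfl⟩, rfl⟩, ⟨j, hj⟩⟩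
  simp only [comp_apply] at hj
  rcases lt_trichotomy i j with hij | rfl | hji
  · exact (hc_bound hij).2.not_gt (hj ▸ (hg (c j)).1)
  · exact hf _ hj.symm
  · exact (hc_bound hji).1.not_gt (hj ▸ (hg (c i)).2)

lemma exists_infinite_image_inter_eq_empty {f : ℕ → ℕ} (hf : ∀ n, f n ≠ n) :
    ∃ A : Set ℕ, A.Infinite ∧ f '' A ∩ A = ∅ := by
  by_cases hfiber : ∃ v, (f ⁻¹' {v}).Infinite
  · obtain ⟨v, hv⟩ := hfiber
    refine ⟨f ⁻¹' {v}, hv, eq_empty_iff_forall_notMem.2 ?_⟩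
    rintro _ ⟨⟨x, hx, rfl⟩, hfx⟩
    exact hf v (by simp_all)
  · push Not at hfiber
    refine exists_infinite_image_inter_eq_empty_of_unbounded hf fun m => ?_
    have hfin : (Iic m ∪ f ⁻¹' Iic m).Finite :=
      (finite_Iic m).union ((finite_Iic m).preimage' fun v _ => hfiber v)
    obtain ⟨x, hx⟩ := hfin.infinite_compl.nonempty
    simp only [mem_compl_iff, mem_union, mem_Iic, mem_preimage, not_or, not_le] at hx
    exact ⟨x, hx⟩

lemma isBinaryRosenthalFamily_setOf_infinite : IsBinaryRosenthalFamily {A : Set ℕ | A.Infinite} :=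
  ⟨fun _ hA => hA, fun _ hf => exists_infinite_image_inter_eq_empty hf⟩

lemma exists_split_of_mk_lt_reapingNumber {G : Set (Set ℕ)} (hG : ∀ A ∈ G, A.Infinite)
    (hlt : #G < reapingNumber) : ∃ X : Set ℕ, ∀ A ∈ G, (A ∩ X).Infinite ∧ (A \ X).Infinite := by
  by_contra h
  exact hlt.not_ge (csInf_le' ⟨G, hG, h, rfl⟩)

/-- The sets `Dₙ \ Dₙ₊₁` of a decreasing chain `D₀ ⊇ D₁ ⊇ ⋯` of sets with property `P`. -/
lemma exists_pairwise_disjoint_of_forall_exists_subset {α : Type*} {P Q : Set α → Prop}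
    {D₀ : Set α} (h₀ : P D₀) (hstep : ∀ D, P D → ∃ D' ⊆ D, P D' ∧ Q (D \ D')) :
    ∃ E : ℕ → Set α, Pairwise (Disjoint on E) ∧ ∀ n, Q (E n) := by
  choose next hsub hP hQ using hstep
  set D : ℕ → {D // P D} := fun n => (fun p => ⟨next p.1 p.2, hP p.1 p.2⟩)^[n] ⟨D₀, h₀⟩
  have hD_succ : ∀ n, (D (n + 1)).1 = next (D n).1 (D n).2 := fun n =>
    congrArg Subtype.val (iterate_succ_apply' _ _ _)
  have hD_anti : Antitone fun n => (D n).1 := antitone_nat_of_succ_le fun n => by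
    rw [hD_succ]; exact hsub _ _
  refine ⟨fun n => (D n).1 \ (D (n + 1)).1, (pairwise_disjoint_on _).2 fun m n hmn => ?_,
    fun n => ?_⟩
  · exact disjoint_sdiff_left.mono_right (sdiff_subset.trans (hD_anti (Nat.succ_le_of_lt hmn)))
  · simpa only [hD_succ] using hQ _ _

lemma exists_pairwise_disjoint_of_mk_lt_reapingNumber {F : Set (Set ℕ)}
    (hF : ∀ A ∈ F, A.Infinite) (hlt : #F < reapingNumber) :
    ∃ E : ℕ → Set ℕ, Pairwise (Disjoint on E) ∧ ∀ n, ∀ A ∈ F, (A ∩ E n).Infinite := by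
  refine exists_pairwise_disjoint_of_forall_exists_subset (D₀ := univ)
    (P := fun D => ∀ A ∈ F, (A ∩ D).Infinite) (Q := fun D => ∀ A ∈ F, (A ∩ D).Infinite)
    (by simpa using hF) fun D hD => ?_
  obtain ⟨X, hX⟩ := exists_split_of_mk_lt_reapingNumber (G := (· ∩ D) '' F)
    (by rintro _ ⟨A, hA, rfl⟩; exact hD A hA) (mk_image_le.trans_lt hlt)
  refine ⟨D ∩ X, inter_subset_left, fun A hA => ?_, fun A hA => ?_⟩
  · simpa only [inter_assoc] using (hX _ ⟨A, hA, rfl⟩).1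
  · simpa only [sdiff_self_inter, inter_sdiff_assoc] using (hX _ ⟨A, hA, rfl⟩).2

lemma exists_image_inter_nonempty_of_pairwise_disjoint {E : ℕ → Set ℕ}
    (hE : Pairwise (Disjoint on E)) : ∃ f : ℕ → ℕ, (∀ n, f n ≠ n) ∧
      ∀ A : Set ℕ, (∀ n, (A ∩ E n).Infinite) → (f '' A ∩ A).Nonempty := by
  classical
  refine ⟨fun y => if h : ∃ n, y ∈ E n ∧ n ≠ y then h.choose else y + 1, fun y => ?_, ?_⟩
  · dsimp only
    split_ifs with h
    exacts [h.choose_spec.2, Nat.succ_ne_self y]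
  · intro A hA
    obtain ⟨x, hxA, -⟩ := (hA 0).nonempty
    obtain ⟨y, ⟨hyA, hyE⟩, hyx⟩ := ((hA x).sdiff (finite_singleton x)).nonempty
    have h : ∃ n, y ∈ E n ∧ n ≠ y := ⟨x, hyE, Ne.symm hyx⟩
    have hchoose : h.choose = x := by
      by_contra hne
      exact disjoint_left.1 (hE hne) h.choose_spec.1 hyE
    exact ⟨x, ⟨y, hyA, by simp only [dif_pos h, hchoose]⟩, hxA⟩

lemma reapingNumber_le_mk_of_isBinaryRosenthalFamily {F : Set (Set ℕ)}
    (hF : IsBinaryRosenthalFamily F) : reapingNumber ≤ #F := by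
  by_contra! hlt
  obtain ⟨E, hdisj, hmeet⟩ := exists_pairwise_disjoint_of_mk_lt_reapingNumber hF.1 hlt
  obtain ⟨f, hf, hcatch⟩ := exists_image_inter_nonempty_of_pairwise_disjoint hdisj
  obtain ⟨A, hA, hfree⟩ := hF.2 f hf
  exact (hcatch A fun n => hmeet n A hA).ne_empty hfree

/-- The reaping number `𝔯` is at most the binary Rosenthal number `ros_01`. -/
theorem reaping_le_binaryRosenthal : reapingNumber ≤ binaryRosenthalNumber :=
  le_csInf ⟨_, _, isBinaryRosenthalFamily_setOf_infinite, rfl⟩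
    fun _ ⟨_, hF, hc⟩ => hc ▸ reapingNumber_le_mk_of_isBinaryRosenthalFamily hF
end

section
/- The c₀-Rosenthal number ros(c₀) is less than or equal to the dominating number 𝔡. -/
open Set Filter ZeroAtInftyContinuousMap
open scoped ZeroAtInfty

/-- Restriction of a `c₀` sequence to a set `A ⊆ ℕ` (the sequence `1_A · f`). -/
noncomputable def c0Restrict (A : Set ℕ) (f : C₀(ℕ, ℝ)) : C₀(ℕ, ℝ) where
  toFun := A.indicator ⇑f
  continuous_toFun := continuous_of_discreteTopology
  zero_at_infty' := by
    have h : Tendsto (fun n : ℕ => ‖f n‖) (cocompact ℕ) (nhds 0) := by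
      simpa using (zero_at_infty f).norm
    exact squeeze_zero_norm (fun n => norm_indicator_le_norm_self (⇑f) n) h

theorem c0Restrict_norm_le (A : Set ℕ) (f : C₀(ℕ, ℝ)) : ‖c0Restrict A f‖ ≤ ‖f‖ := by
  rw [← norm_toBCF_eq_norm, ← norm_toBCF_eq_norm]
  refine BoundedContinuousFunction.norm_le_of_nonempty.mpr fun n => ?_
  calc ‖(c0Restrict A f).toBCF n‖ = ‖A.indicator (⇑f) n‖ := rfl
    _ ≤ ‖f n‖ := norm_indicator_le_norm_self (⇑f) n
    _ ≤ ‖f.toBCF‖ := BoundedContinuousFunction.norm_coe_le_norm f.toBCF n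

/-- Multiplication by the characteristic function of `A ⊆ ℕ`, as a bounded linear operator
on `c₀`. -/
noncomputable def c0Proj (A : Set ℕ) : C₀(ℕ, ℝ) →L[ℝ] C₀(ℕ, ℝ) :=
  LinearMap.mkContinuous
    { toFun := c0Restrict A
      map_add' := fun f g => by
        ext n
        show A.indicator (⇑(f + g)) n = A.indicator (⇑f) n + A.indicator (⇑g) n
        by_cases hn : n ∈ A <;> simp [Set.indicator_apply, hn]
      map_smul' := fun c f => by
        ext n
        show A.indicator (⇑(c • f)) n = c • A.indicator (⇑f) n
        by_cases hn : n ∈ A <;> simp [Set.indicator_apply, hn] }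
    1
    (fun f => by simpa using c0Restrict_norm_le A f)

/-- The characteristic function of `{n}` as an element of `c₀`. -/
noncomputable def c0Single (n : ℕ) : C₀(ℕ, ℝ) where
  toFun := ({n} : Set ℕ).indicator 1
  continuous_toFun := continuous_of_discreteTopology
  zero_at_infty' := by
    have hmem : ({n}ᶜ : Set ℕ) ∈ cocompact ℕ := by
      rw [Filter.mem_cocompact]
      exact ⟨{n}, isCompact_singleton, le_refl _⟩
    have h : ∀ᶠ m in cocompact ℕ, ({n} : Set ℕ).indicator (1 : ℕ → ℝ) m = 0 := by
      filter_upwards [hmem] with m hm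
      exact Set.indicator_of_notMem hm 1
    exact Filter.Tendsto.congr' (h.mono fun m hm => hm.symm) tendsto_const_nhds

/-- A *`c₀`-Rosenthal family*: a family of infinite subsets of `ℕ` such that for every
bounded linear operator `T` on `c₀` with zero diagonal and every `ε > 0` there is a member
`A` of the family with `‖P_A T P_A‖ ≤ ε‖T‖`. -/
def IsC0RosenthalFamily (F : Set (Set ℕ)) : Prop :=
  (∀ A ∈ F, A.Infinite) ∧
    ∀ T : C₀(ℕ, ℝ) →L[ℝ] C₀(ℕ, ℝ), (∀ n : ℕ, T (c0Single n) n = 0) →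
      ∀ ε : ℝ, 0 < ε → ∃ A ∈ F, ‖(c0Proj A).comp (T.comp (c0Proj A))‖ ≤ ε * ‖T‖

/-- The `c₀`-Rosenthal number `ros(c₀)`: the minimal cardinality of a `c₀`-Rosenthal
family. -/
noncomputable def c0RosenthalNumber : Cardinal :=
  sInf {c | ∃ F : Set (Set ℕ), IsC0RosenthalFamily F ∧ Cardinal.mk F = c}

/-- The dominating number `𝔡`: the minimal cardinality of a family `D ⊆ ℕ^ℕ` such that
every `f : ℕ → ℕ` is eventually dominated by a member of `D`. -/
noncomputable def dominatingNumber : Cardinal :=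
  sInf {c | ∃ D : Set (ℕ → ℕ),
    (∀ f : ℕ → ℕ, ∃ g ∈ D, ∀ᶠ k in Filter.atTop, f k ≤ g k) ∧ Cardinal.mk D = c}

/-! The matrix `t m n = (T eₙ)(m)` of a bounded operator `T` on `c₀` has absolutely summable rows
and null columns. Given `δ > 0`, this yields `f : ℕ → ℕ` with `∑_{n ≥ f m} |t m n| ≤ δ/2` and
`|t m n| ≤ δ/2/2/2ⁿ` for `m ≥ f n`. If `T` has zero diagonal and `A` is a set in which `f m ≤ n`
whenever `m < n`, every row of `P_A T P_A` has `ℓ¹`-norm at most `δ`, hence `‖P_A T P_A‖ ≤ δ`.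
Such an infinite `A` is obtained by iterating `n ↦ max (n + 1) (g n)` from a point `K` beyond
which `f ≤ g`, so the orbits attached to a dominating family `D` and all `K : ℕ` form a
`c₀`-Rosenthal family of cardinality `|D| · ℵ₀ = |D|`. -/

namespace ZeroAtInftyContinuousMap

variable {α β : Type*} [TopologicalSpace α] [SeminormedAddCommGroup β]

theorem norm_apply_le (f : C₀(α, β)) (x : α) : ‖f x‖ ≤ ‖f‖ := by
  rw [← norm_toBCF_eq_norm]
  exact f.toBCF.norm_coe_le_norm x

theorem norm_le_of_forall_norm_apply_le [Nonempty α] {f : C₀(α, β)} {M : ℝ}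
    (h : ∀ x, ‖f x‖ ≤ M) : ‖f‖ ≤ M :=
  BoundedContinuousFunction.norm_le_of_nonempty.mpr h

theorem finset_sum_apply {ι : Type*} (s : Finset ι) (f : ι → C₀(α, β)) (x : α) :
    (∑ i ∈ s, f i) x = ∑ i ∈ s, f i x :=
  map_sum (⟨⟨fun g => g x, rfl⟩, fun _ _ => rfl⟩ : C₀(α, β) →+ β) f s

variable (𝕜 : Type*) [NormedField 𝕜] [NormedSpace 𝕜 β]

noncomputable def evalCLM (x : α) : C₀(α, β) →L[𝕜] β :=
  LinearMap.mkContinuous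
    { toFun := fun f => f x
      map_add' := fun _ _ => rfl
      map_smul' := fun _ _ => rfl }
    1 fun f => by simpa using norm_apply_le f x

end ZeroAtInftyContinuousMap

theorem Summable.exists_norm_sum_lt_of_forall_ge {E : Type*} [SeminormedAddCommGroup E]
    {a : ℕ → E} (ha : Summable a) {δ : ℝ} (hδ : 0 < δ) :
    ∃ N : ℕ, ∀ s : Finset ℕ, (∀ n ∈ s, N ≤ n) → ‖∑ n ∈ s, a n‖ < δ := by
  obtain ⟨s₀, hs₀⟩ := ha.vanishing (Metric.ball_mem_nhds 0 hδ)
  obtain ⟨N, hN⟩ := s₀.exists_nat_subset_range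
  refine ⟨N, fun s hs => ?_⟩
  have hdisj : Disjoint s s₀ := Finset.disjoint_left.mpr fun n hn hn₀ =>
    (hs n hn).not_gt (Finset.mem_range.mp (hN hn₀))
  simpa using hs₀ s hdisj

theorem c0Proj_apply (A : Set ℕ) (x : C₀(ℕ, ℝ)) (n : ℕ) : c0Proj A x n = A.indicator x n :=
  rfl

theorem c0Single_apply (j n : ℕ) : c0Single j n = if n = j then 1 else 0 := by
  show ({j} : Set ℕ).indicator 1 n = _
  simp [Set.indicator_apply]

theorem sum_smul_c0Single_apply (s : Finset ℕ) (c : ℕ → ℝ) (n : ℕ) :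
    (∑ j ∈ s, c j • c0Single j) n = if n ∈ s then c n else 0 := by
  simp [finset_sum_apply, c0Single_apply]

open scoped Classical in
theorem c0Proj_Iio_c0Proj_eq_sum (A : Set ℕ) (N : ℕ) (x : C₀(ℕ, ℝ)) :
    c0Proj (Iio N) (c0Proj A x) = ∑ j ∈ (Finset.range N).filter (· ∈ A), x j • c0Single j := by
  ext n
  rw [sum_smul_c0Single_apply, c0Proj_apply]
  by_cases hN : n < N <;> by_cases hA : n ∈ A <;> simp [hN, hA, c0Proj_apply]

theorem tendsto_c0Proj_Iio (x : C₀(ℕ, ℝ)) :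
    Tendsto (fun N => c0Proj (Iio N) x) atTop (nhds x) := by
  have hx : Tendsto x atTop (nhds 0) := by simpa [cocompact_eq_atTop] using zero_at_infty x
  refine Metric.tendsto_atTop.mpr fun ε hε => ?_
  obtain ⟨N₀, hN₀⟩ := Metric.tendsto_atTop.mp hx (ε / 2) (half_pos hε)
  refine ⟨N₀, fun N hN => ?_⟩
  rw [dist_eq_norm]
  refine (norm_le_of_forall_norm_apply_le fun n => ?_).trans_lt (half_lt_self hε)
  rw [ZeroAtInftyContinuousMap.sub_apply, c0Proj_apply, indicator_apply]
  split_ifs with hn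
  · simpa using (half_pos hε).le
  · simpa using (hN₀ n (hN.trans (not_lt.mp hn))).le

noncomputable def c0Entry (T : C₀(ℕ, ℝ) →L[ℝ] C₀(ℕ, ℝ)) (m n : ℕ) : ℝ :=
  T (c0Single n) m

section Matrix

variable (T : C₀(ℕ, ℝ) →L[ℝ] C₀(ℕ, ℝ))

theorem apply_sum_smul_c0Single (s : Finset ℕ) (c : ℕ → ℝ) (m : ℕ) :
    T (∑ j ∈ s, c j • c0Single j) m = ∑ j ∈ s, c j * c0Entry T m j := by
  simp [finset_sum_apply, c0Entry]

theorem sum_abs_c0Entry_le_opNorm (m : ℕ) (s : Finset ℕ) : ∑ n ∈ s, |c0Entry T m n| ≤ ‖T‖ := by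
  set x := ∑ j ∈ s, (SignType.sign (c0Entry T m j) : ℝ) • c0Single j
  have hx : ‖x‖ ≤ 1 := norm_le_of_forall_norm_apply_le fun n => by
    rw [sum_smul_c0Single_apply]
    split_ifs
    · cases SignType.sign (c0Entry T m n) <;> simp
    · simp
  calc ∑ n ∈ s, |c0Entry T m n| = T x m := by
        simp only [x, apply_sum_smul_c0Single, sign_mul_self]
    _ ≤ ‖T x‖ := (le_abs_self _).trans (norm_apply_le (T x) m)
    _ ≤ ‖T‖ * ‖x‖ := T.le_opNorm x
    _ ≤ ‖T‖ := mul_le_of_le_one_right (norm_nonneg T) hx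

theorem summable_abs_c0Entry (m : ℕ) : Summable fun n => |c0Entry T m n| :=
  summable_of_sum_le (fun _ => abs_nonneg _) (sum_abs_c0Entry_le_opNorm T m)

theorem tendsto_c0Entry_atTop (n : ℕ) : Tendsto (fun m => c0Entry T m n) atTop (nhds 0) := by
  have h := zero_at_infty (T (c0Single n))
  rwa [cocompact_eq_atTop] at h

theorem exists_c0Entry_bounds {δ : ℝ} (hδ : 0 < δ) : ∃ f : ℕ → ℕ,
    (∀ m (s : Finset ℕ), (∀ n ∈ s, f m ≤ n) → ∑ n ∈ s, |c0Entry T m n| ≤ δ / 2) ∧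
    (∀ m n, f n ≤ m → |c0Entry T m n| ≤ δ / 2 / 2 / 2 ^ n) := by
  have hrow m := (summable_abs_c0Entry T m).exists_norm_sum_lt_of_forall_ge (half_pos hδ)
  have hcol n : ∀ᶠ m in atTop, |c0Entry T m n| < δ / 2 / 2 / 2 ^ n := by
    have h := (tendsto_c0Entry_atTop T n).abs
    rw [abs_zero] at h
    exact h.eventually (gt_mem_nhds (by positivity))
  choose N₁ hN₁ using hrow
  choose N₂ hN₂ using fun n => eventually_atTop.mp (hcol n)
  refine ⟨fun n => max (N₁ n) (N₂ n), fun m s hs => ?_, fun m n hm => ?_⟩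
  · have := hN₁ m s fun n hn => (le_max_left _ _).trans (hs n hn)
    rw [Real.norm_of_nonneg (Finset.sum_nonneg fun _ _ => abs_nonneg _)] at this
    exact this.le
  · exact (hN₂ n m ((le_max_right _ _).trans hm)).le

theorem opNorm_c0Proj_comp_comp_c0Proj_le {A : Set ℕ} {δ : ℝ} (hδ : 0 ≤ δ)
    (h : ∀ m ∈ A, ∀ s : Finset ℕ, ↑s ⊆ A → ∑ n ∈ s, |c0Entry T m n| ≤ δ) :
    ‖(c0Proj A).comp (T.comp (c0Proj A))‖ ≤ δ := by
  classical
  refine ContinuousLinearMap.opNorm_le_bound _ hδ fun x =>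
    norm_le_of_forall_norm_apply_le fun m => ?_
  rw [ContinuousLinearMap.comp_apply, ContinuousLinearMap.comp_apply, c0Proj_apply,
    Real.norm_eq_abs]
  by_cases hm : m ∈ A
  swap
  · simpa [hm] using mul_nonneg hδ (norm_nonneg x)
  rw [indicator_of_mem hm]
  -- `T` sees only finitely many columns on the truncations of `P_A x`, which converge to it
  have approx : Tendsto (fun N => T (c0Proj (Iio N) (c0Proj A x)) m) atTop
      (nhds (T (c0Proj A x) m)) :=
    ((evalCLM ℝ m).continuous.tendsto _).comp
      ((T.continuous.tendsto _).comp (tendsto_c0Proj_Iio _))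
  refine le_of_tendsto' approx.abs fun N => ?_
  rw [c0Proj_Iio_c0Proj_eq_sum, apply_sum_smul_c0Single]
  set s := (Finset.range N).filter (· ∈ A)
  have hs : ↑s ⊆ A := fun n hn => (Finset.mem_filter.mp hn).2
  calc |∑ j ∈ s, x j * c0Entry T m j| ≤ ∑ j ∈ s, ‖x‖ * |c0Entry T m j| := by
        refine (Finset.abs_sum_le_sum_abs _ _).trans (Finset.sum_le_sum fun j _ => ?_)
        rw [abs_mul]
        exact mul_le_mul_of_nonneg_right (norm_apply_le x j) (abs_nonneg _)
    _ = ‖x‖ * ∑ j ∈ s, |c0Entry T m j| := (Finset.mul_sum _ _ _).symm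
    _ ≤ δ * ‖x‖ := by
        rw [mul_comm δ]
        exact mul_le_mul_of_nonneg_left (h m hm s hs) (norm_nonneg x)

end Matrix

def IsSparse (f : ℕ → ℕ) (A : Set ℕ) : Prop :=
  ∀ m ∈ A, ∀ n ∈ A, m < n → f m ≤ n

theorem sum_abs_c0Entry_le_of_isSparse {T : C₀(ℕ, ℝ) →L[ℝ] C₀(ℕ, ℝ)}
    (hT : ∀ n : ℕ, T (c0Single n) n = 0) {f : ℕ → ℕ} {δ : ℝ}
    (hrow : ∀ m (s : Finset ℕ), (∀ n ∈ s, f m ≤ n) → ∑ n ∈ s, |c0Entry T m n| ≤ δ / 2)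
    (hcol : ∀ m n, f n ≤ m → |c0Entry T m n| ≤ δ / 2 / 2 / 2 ^ n)
    {A : Set ℕ} (hA : IsSparse f A) {m : ℕ} (hm : m ∈ A) {s : Finset ℕ} (hs : ↑s ⊆ A) :
    ∑ n ∈ s, |c0Entry T m n| ≤ δ := by
  have hδ : 0 ≤ δ / 2 := by simpa using hrow m ∅
  have hdiag : ∑ n ∈ s.filter (· ≠ m), |c0Entry T m n| = ∑ n ∈ s, |c0Entry T m n| :=
    Finset.sum_filter_of_ne fun n _ hn h => hn (by simp [h, c0Entry, hT])
  rw [← hdiag, ← Finset.sum_filter_add_sum_filter_not _ (· < m)]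
  have hbelow : ∑ n ∈ (s.filter (· ≠ m)).filter (· < m), |c0Entry T m n| ≤ δ / 2 := by
    calc _ ≤ ∑ n ∈ (s.filter (· ≠ m)).filter (· < m), δ / 2 / 2 / 2 ^ n := by
          refine Finset.sum_le_sum fun n hn => ?_
          simp only [Finset.mem_filter] at hn
          exact hcol m n (hA n (hs hn.1.1) m hm hn.2)
      _ ≤ ∑' n, δ / 2 / 2 / 2 ^ n :=
          (summable_geometric_two' _).sum_le_tsum _ fun n _ => by positivity
      _ = δ / 2 := tsum_geometric_two' _
  have habove : ∑ n ∈ (s.filter (· ≠ m)).filter (¬ · < m), |c0Entry T m n| ≤ δ / 2 := by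
    refine hrow m _ fun n hn => hA m hm n (hs ?_) ?_ <;>
      simp only [Finset.mem_filter] at hn
    · exact hn.1.1
    · exact lt_of_le_of_ne (not_lt.mp hn.2) (Ne.symm hn.1.2)
  linarith

def sparseOrbit (g : ℕ → ℕ) (K k : ℕ) : ℕ :=
  (fun n => max (n + 1) (g n))^[k] K

theorem sparseOrbit_succ (g : ℕ → ℕ) (K k : ℕ) :
    sparseOrbit g K (k + 1) = max (sparseOrbit g K k + 1) (g (sparseOrbit g K k)) :=
  Function.iterate_succ_apply' _ k K

theorem strictMono_sparseOrbit (g : ℕ → ℕ) (K : ℕ) : StrictMono (sparseOrbit g K) :=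
  strictMono_nat_of_lt_succ fun k => by
    rw [sparseOrbit_succ]
    exact Nat.lt_of_succ_le (le_max_left _ _)

theorem infinite_range_sparseOrbit (g : ℕ → ℕ) (K : ℕ) : (range (sparseOrbit g K)).Infinite :=
  infinite_range_of_injective (strictMono_sparseOrbit g K).injective

theorem isSparse_range_sparseOrbit {f g : ℕ → ℕ} {K : ℕ} (hfg : ∀ n ≥ K, f n ≤ g n) :
    IsSparse f (range (sparseOrbit g K)) := by
  rintro _ ⟨i, rfl⟩ _ ⟨j, rfl⟩ hij
  have hK : K ≤ sparseOrbit g K i := (strictMono_sparseOrbit g K).monotone (Nat.zero_le i)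
  calc f (sparseOrbit g K i) ≤ g (sparseOrbit g K i) := hfg _ hK
    _ ≤ sparseOrbit g K (i + 1) := by rw [sparseOrbit_succ]; exact le_max_right _ _
    _ ≤ sparseOrbit g K j :=
        (strictMono_sparseOrbit g K).monotone ((strictMono_sparseOrbit g K).lt_iff_lt.mp hij)

def IsDominating (D : Set (ℕ → ℕ)) : Prop :=
  ∀ f : ℕ → ℕ, ∃ g ∈ D, ∀ᶠ k in atTop, f k ≤ g k

def sparseOrbits (D : Set (ℕ → ℕ)) : Set (Set ℕ) :=
  image2 (fun g K => range (sparseOrbit g K)) D univ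

theorem exists_mem_sparseOrbits_opNorm_le {D : Set (ℕ → ℕ)} (hD : IsDominating D)
    {T : C₀(ℕ, ℝ) →L[ℝ] C₀(ℕ, ℝ)} (hT : ∀ n : ℕ, T (c0Single n) n = 0) {δ : ℝ} (hδ : 0 < δ) :
    ∃ A ∈ sparseOrbits D, ‖(c0Proj A).comp (T.comp (c0Proj A))‖ ≤ δ := by
  obtain ⟨f, hrow, hcol⟩ := exists_c0Entry_bounds T hδ
  obtain ⟨g, hg, hfg⟩ := hD f
  obtain ⟨K, hK⟩ := eventually_atTop.mp hfg
  have hA := isSparse_range_sparseOrbit hK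
  exact ⟨_, mem_image2_of_mem hg (mem_univ K), opNorm_c0Proj_comp_comp_c0Proj_le T hδ.le
    fun m hm s hs => sum_abs_c0Entry_le_of_isSparse hT hrow hcol hA hm hs⟩

theorem isC0RosenthalFamily_sparseOrbits {D : Set (ℕ → ℕ)} (hD : IsDominating D) :
    IsC0RosenthalFamily (sparseOrbits D) := by
  refine ⟨?_, fun T hT ε hε => ?_⟩
  · rintro _ ⟨g, -, K, -, rfl⟩
    exact infinite_range_sparseOrbit g K
  rcases (norm_nonneg T).eq_or_lt with hT0 | hTpos
  · obtain ⟨A, hA, -⟩ := exists_mem_sparseOrbits_opNorm_le hD hT one_pos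
    rw [(T.opNorm_zero_iff).mp hT0.symm]
    exact ⟨A, hA, by simp [ContinuousLinearMap.opNorm_zero]⟩
  · exact exists_mem_sparseOrbits_opNorm_le hD hT (mul_pos hε hTpos)

theorem IsDominating.infinite {D : Set (ℕ → ℕ)} (hD : IsDominating D) : D.Infinite := fun hfin => by
  obtain ⟨u, hu⟩ := hfin.bddAbove
  obtain ⟨g, hg, hug⟩ := hD fun k => u k + 1
  obtain ⟨k, hk⟩ := hug.exists
  exact Nat.not_succ_le_self _ (hk.trans (hu hg k))

/-- The `c₀`-Rosenthal number `ros(c₀)` is at most the dominating number `𝔡`. -/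
theorem c0Rosenthal_le_dominating : c0RosenthalNumber ≤ dominatingNumber := by
  obtain ⟨D, hD, hcard⟩ :
      dominatingNumber ∈ {c | ∃ D, IsDominating D ∧ Cardinal.mk D = c} :=
    csInf_mem ⟨_, univ, fun f => ⟨f, mem_univ f, .of_forall fun _ => le_rfl⟩, rfl⟩
  have hD_inf : Cardinal.aleph0 ≤ Cardinal.mk D :=
    Cardinal.aleph0_le_mk_iff.mpr hD.infinite.to_subtype
  calc c0RosenthalNumber ≤ Cardinal.mk (sparseOrbits D) :=
        csInf_le' ⟨_, isC0RosenthalFamily_sparseOrbits hD, rfl⟩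
    _ ≤ Cardinal.mk D * Cardinal.mk (univ : Set ℕ) := Cardinal.mk_image2_le
    _ = dominatingNumber := by
        rw [Cardinal.mk_univ, Cardinal.mk_nat, Cardinal.mul_aleph0_eq hD_inf, hcard]
end

section
/- The paving lemma fails for operators on ℓ∞: there exists a bounded linear operator T : ℓ∞ → ℓ∞ with ‖T‖ = 1 and T(1_{{n}}) = 0 for every n ∈ ℕ, such that for every finite partition {A_1, …, A_l} of ℕ there is 1 ≤ i ≤ l with ‖P_{A_i} T P_{A_i}‖ = 1. -/
open Set
open scoped ENNReal

theorem memℓp_infty_indicator (A : Set ℕ) (f : lp (fun _ : ℕ => ℝ) ∞) :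
    Memℓp (fun n => A.indicator (⇑f) n) ∞ := by
  apply memℓp_infty
  refine ⟨‖f‖, ?_⟩
  rintro x ⟨n, rfl⟩
  exact (norm_indicator_le_norm_self (⇑f) n).trans
    (lp.norm_apply_le_norm ENNReal.top_ne_zero f n)

/-- The element of `ℓ∞` obtained by restricting `f` to `A`. -/
noncomputable def linftyRestrict (A : Set ℕ) (f : lp (fun _ : ℕ => ℝ) ∞) :
    lp (fun _ : ℕ => ℝ) ∞ :=
  ⟨fun n => A.indicator (⇑f) n, memℓp_infty_indicator A f⟩

theorem linftyRestrict_norm_le (A : Set ℕ) (f : lp (fun _ : ℕ => ℝ) ∞) :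
    ‖linftyRestrict A f‖ ≤ ‖f‖ := by
  refine lp.norm_le_of_forall_le (norm_nonneg f) fun n => ?_
  exact (norm_indicator_le_norm_self (⇑f) n).trans
    (lp.norm_apply_le_norm ENNReal.top_ne_zero f n)

/-- Multiplication by the characteristic function of `A ⊆ ℕ`, as a bounded linear operator
on `ℓ∞`. -/
noncomputable def linftyProj (A : Set ℕ) :
    lp (fun _ : ℕ => ℝ) ∞ →L[ℝ] lp (fun _ : ℕ => ℝ) ∞ :=
  LinearMap.mkContinuous
    { toFun := linftyRestrict A
      map_add' := fun f g => by
        refine lp.ext ?_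
        rw [lp.coeFn_add]
        funext n
        show A.indicator (⇑(f + g)) n = A.indicator (⇑f) n + A.indicator (⇑g) n
        rw [lp.coeFn_add]
        by_cases hn : n ∈ A <;> simp [Set.indicator_apply, hn]
      map_smul' := fun c f => by
        refine lp.ext ?_
        rw [RingHom.id_apply, lp.coeFn_smul]
        funext n
        show A.indicator (⇑(c • f)) n = c • A.indicator (⇑f) n
        rw [lp.coeFn_smul]
        by_cases hn : n ∈ A <;> simp [Set.indicator_apply, hn] }
    1
    (fun f => by rw [one_mul]; exact linftyRestrict_norm_le A f)


/-! Take a free ultrafilter `U` on `ℕ` and the rank-one operator `T f = (lim_U f) • 1`, which has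
norm one and kills every finitely supported sequence. A finite cover of `ℕ` has a piece `A ∈ U`,
and then `P_A T P_A 1 = (lim_U 1_A) • 1_A = 1_A`, so `‖P_A T P_A‖ = 1`. -/

open Filter Topology

namespace lp

variable {ι : Type*} (U : Ultrafilter ι)

theorem exists_tendsto_ultrafilter (f : lp (fun _ : ι => ℝ) ∞) : ∃ a, Tendsto f U (𝓝 a) := by
  obtain ⟨a, -, ha⟩ := (isCompact_closedBall (0 : ℝ) ‖f‖).ultrafilter_le_nhds' (U.map f)
    (Ultrafilter.mem_map.2 (univ_mem' fun i => by
      simpa using norm_apply_le_norm ENNReal.top_ne_zero f i))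
  exact ⟨a, ha⟩

noncomputable def ultrafilterLimCLM : lp (fun _ : ι => ℝ) ∞ →L[ℝ] ℝ :=
  LinearMap.mkContinuous
    { toFun f := limUnder U f
      map_add' f g := tendsto_nhds_unique
        (tendsto_nhds_limUnder (exists_tendsto_ultrafilter U (f + g)))
        ((tendsto_nhds_limUnder (exists_tendsto_ultrafilter U f)).add
          (tendsto_nhds_limUnder (exists_tendsto_ultrafilter U g)))
      map_smul' c f := tendsto_nhds_unique
        (tendsto_nhds_limUnder (exists_tendsto_ultrafilter U (c • f)))
        ((tendsto_nhds_limUnder (exists_tendsto_ultrafilter U f)).const_smul c) }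
    1 fun f => by
      rw [one_mul]
      exact le_of_tendsto (tendsto_nhds_limUnder (exists_tendsto_ultrafilter U f)).norm
        (Eventually.of_forall (norm_apply_le_norm ENNReal.top_ne_zero f))

theorem tendsto_ultrafilterLimCLM (f : lp (fun _ : ι => ℝ) ∞) :
    Tendsto f U (𝓝 (ultrafilterLimCLM U f)) :=
  tendsto_nhds_limUnder (exists_tendsto_ultrafilter U f)

theorem ultrafilterLimCLM_eq_of_eventually_eq {f : lp (fun _ : ι => ℝ) ∞} {a : ℝ}
    (h : ∀ᶠ i in U, f i = a) : ultrafilterLimCLM U f = a :=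
  tendsto_nhds_unique (tendsto_ultrafilterLimCLM U f)
    (tendsto_const_nhds.congr' (h.mono fun _ => Eq.symm))

theorem ultrafilterLimCLM_one : ultrafilterLimCLM U 1 = 1 :=
  ultrafilterLimCLM_eq_of_eventually_eq U (Eventually.of_forall fun _ => rfl)

theorem ultrafilterLimCLM_single [DecidableEq ι] {U : Ultrafilter ι}
    (hU : (U : Filter ι) ≤ cofinite) (i : ι) (c : ℝ) : ultrafilterLimCLM U (lp.single ∞ i c) = 0 :=
  ultrafilterLimCLM_eq_of_eventually_eq U <|
    mem_of_superset (hU (finite_singleton i).compl_mem_cofinite) fun _ hj =>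
      lp.single_apply_ne (E := fun _ => ℝ) ∞ i c hj

theorem norm_ultrafilterLimCLM : ‖ultrafilterLimCLM U‖ = 1 := by
  have : Nonempty ι := nonempty_of_neBot (U : Filter ι)
  refine le_antisymm (LinearMap.mkContinuous_norm_le _ zero_le_one _) ?_
  simpa [ultrafilterLimCLM_one] using (ultrafilterLimCLM U).le_opNorm 1

noncomputable def constUltrafilterLimCLM : lp (fun _ : ι => ℝ) ∞ →L[ℝ] lp (fun _ : ι => ℝ) ∞ :=
  (ultrafilterLimCLM U).smulRight 1

theorem constUltrafilterLimCLM_apply (f : lp (fun _ : ι => ℝ) ∞) :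
    constUltrafilterLimCLM U f = ultrafilterLimCLM U f • 1 := rfl

theorem norm_constUltrafilterLimCLM : ‖constUltrafilterLimCLM U‖ = 1 := by
  have : Nonempty ι := nonempty_of_neBot (U : Filter ι)
  rw [constUltrafilterLimCLM, ContinuousLinearMap.norm_smulRight_apply, norm_ultrafilterLimCLM,
    norm_one, one_mul]

end lp

theorem linftyProj_apply (A : Set ℕ) (f : lp (fun _ : ℕ => ℝ) ∞) (n : ℕ) :
    linftyProj A f n = A.indicator f n := rfl

theorem norm_linftyProj_le (A : Set ℕ) : ‖linftyProj A‖ ≤ 1 :=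
  LinearMap.mkContinuous_norm_le _ zero_le_one _

theorem norm_linftyProj_one {A : Set ℕ} (hA : A.Nonempty) : ‖linftyProj A 1‖ = 1 := by
  refine le_antisymm ?_ ?_
  · have := (linftyProj A).le_of_opNorm_le (norm_linftyProj_le A) 1
    rwa [norm_one, mul_one] at this
  · obtain ⟨n, hn⟩ := hA
    have := lp.norm_apply_le_norm ENNReal.top_ne_zero (linftyProj A 1) n
    rwa [linftyProj_apply, indicator_of_mem hn, lp.infty_coeFn_one, Pi.one_apply, norm_one] at this

theorem norm_linftyProj_comp_constUltrafilterLimCLM_comp_linftyProj {U : Ultrafilter ℕ}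
    {A : Set ℕ} (hA : A ∈ U) :
    ‖(linftyProj A).comp ((lp.constUltrafilterLimCLM U).comp (linftyProj A))‖ = 1 := by
  set S := (linftyProj A).comp ((lp.constUltrafilterLimCLM U).comp (linftyProj A))
  have hlim : lp.ultrafilterLimCLM U (linftyProj A 1) = 1 :=
    lp.ultrafilterLimCLM_eq_of_eventually_eq U <|
      mem_of_superset hA fun n hn => by
        rw [mem_ofPred_eq, linftyProj_apply, indicator_of_mem hn, lp.infty_coeFn_one, Pi.one_apply]
  have hS : S 1 = linftyProj A 1 := by
    rw [ContinuousLinearMap.comp_apply, ContinuousLinearMap.comp_apply,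
      lp.constUltrafilterLimCLM_apply, hlim, one_smul]
  refine le_antisymm ?_ ?_
  · calc ‖S‖ ≤ ‖linftyProj A‖ * (‖lp.constUltrafilterLimCLM U‖ * ‖linftyProj A‖) :=
          (ContinuousLinearMap.opNorm_comp_le _ _).trans
            (by gcongr; exact ContinuousLinearMap.opNorm_comp_le _ _)
      _ ≤ 1 * (1 * 1) := by
          gcongr
          · exact norm_linftyProj_le A
          · exact (lp.norm_constUltrafilterLimCLM U).le
          · exact norm_linftyProj_le A
      _ = 1 := by ring
  · simpa [hS, norm_linftyProj_one (U.nonempty_of_mem hA)] using S.le_opNorm 1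

/-- The paving lemma fails for operators on `ℓ∞`: there is a norm-one operator `T` on `ℓ∞`
vanishing on all the characteristic functions `1_{{n}}` such that for every finite
partition `{P i : i < l}` of `ℕ` some piece `P i` satisfies `‖P_{P i} T P_{P i}‖ = 1`. -/
theorem no_paving_for_linfty :
    ∃ T : lp (fun _ : ℕ => ℝ) ∞ →L[ℝ] lp (fun _ : ℕ => ℝ) ∞,
      ‖T‖ = 1 ∧ (∀ n : ℕ, T (lp.single ∞ n 1) = 0) ∧
        ∀ l : ℕ, ∀ P : Fin l → Set ℕ, (⋃ i, P i) = Set.univ →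
          Pairwise (Function.onFun Disjoint P) →
            ∃ i, ‖(linftyProj (P i)).comp (T.comp (linftyProj (P i)))‖ = 1 := by
  let U := Ultrafilter.of (cofinite : Filter ℕ)
  refine ⟨lp.constUltrafilterLimCLM U, lp.norm_constUltrafilterLimCLM U, fun n => ?_,
    fun l P hcover _ => ?_⟩
  · rw [lp.constUltrafilterLimCLM_apply, lp.ultrafilterLimCLM_single (Ultrafilter.of_le _),
      zero_smul]
  · obtain ⟨i, hi⟩ := U.eventually_exists_iff.1 <|
      Eventually.of_forall fun n => mem_iUnion.1 (hcover ▸ mem_univ n)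
    exact ⟨i, norm_linftyProj_comp_constUltrafilterLimCLM_comp_linftyProj hi⟩
end
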